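/- arXiv:1309.4882 — 12 statements merged into one kernel-verified Lean document; each statement's English description precedes it below -/
import Mathlib

section
/- Let f be a real-valued function on [-1,1], let p be a real polynomial of degree at most d, and let δ > 0. Suppose the error function ε := f - p assumes alternately positive and negative signs at d+2 increasing points -1 ≤ x_0 < x_1 < ... < x_{d+1} ≤ 1 (i.e., for each i, ε(x_i) and ε(x_{i+1}) have opposite signs) and satisfies |ε(x_i)| ≥ δ for all i = 0,...,d+1. Then for every real polynomial q of degree at most d, sup_{x ∈ [-1,1]} |f(x) - q(x)| ≥ δ. -/
/-!
If some `q` of degree at most `d` had `|f - q| < δ` on `[-1, 1]`, then at each node `xᵢ` the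
difference `q - p = (f - p) - (f - q)` would have the sign of `f - p`, because `|f - q| < |f - p|`
there. So `q - p` changes sign `d + 1` times, has `d + 1` distinct roots, and its degree is at
least `d + 1`, which is impossible.
-/

open Polynomial

theorem mul_sub_pos_of_abs_lt {R : Type*} [Ring R] [LinearOrder R] [IsStrictOrderedRing R]
    {a b : R} (h : |b| < |a|) : 0 < a * (a - b) := by
  calc 0 < |a| * (|a| - |b|) := mul_pos ((abs_nonneg b).trans_lt h) (sub_pos.mpr h)
    _ = a * a - |a * b| := by rw [mul_sub, abs_mul_abs_self, abs_mul]
    _ ≤ a * (a - b) := by rw [mul_sub]; exact sub_le_sub_left (le_abs_self _) _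

theorem exists_mem_Ioo_eq_zero_of_mul_neg {α : Type*} [ConditionallyCompleteLinearOrder α]
    [TopologicalSpace α] [OrderTopology α] [DenselyOrdered α] {a b : α} (hab : a ≤ b)
    {g : α → ℝ} (hg : ContinuousOn g (Set.Icc a b)) (hsign : g a * g b < 0) :
    ∃ c ∈ Set.Ioo a b, g c = 0 := by
  rcases mul_neg_iff.mp hsign with ⟨ha, hb⟩ | ⟨ha, hb⟩
  · exact intermediate_value_Ioo' hab hg ⟨hb, ha⟩
  · exact intermediate_value_Ioo hab hg ⟨ha, hb⟩

theorem Polynomial.le_natDegree_of_sign_alternating {n : ℕ} (r : ℝ[X]) {x : Fin (n + 1) → ℝ}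
    (hx : StrictMono x) (halt : ∀ i : Fin n, r.eval (x i.castSucc) * r.eval (x i.succ) < 0) :
    n ≤ r.natDegree := by
  have hroot : ∀ i : Fin n, ∃ y ∈ Set.Ioo (x i.castSucc) (x i.succ), r.eval y = 0 := fun i =>
    exists_mem_Ioo_eq_zero_of_mul_neg (hx Fin.castSucc_lt_succ).le r.continuous.continuousOn
      (halt i)
  choose y hy hy_root using hroot
  have hy_mono : StrictMono y := fun i j hij =>
    calc y i < x i.succ := (hy i).2
      _ ≤ x j.castSucc := hx.monotone (Fin.succ_le_castSucc_iff.mpr hij)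
      _ < y j := (hy j).1
  by_contra! hdeg
  have hr : r = 0 :=
    eq_zero_of_natDegree_lt_card_of_eval_eq_zero r hy_mono.injective hy_root (by simpa using hdeg)
  simpa [hr] using halt ⟨0, r.natDegree.zero_le.trans_lt hdeg⟩

theorem de_la_vallee_poussin_general (f : ℝ → ℝ) (d : ℕ) (p : Polynomial ℝ)
    (hp : p.natDegree ≤ d) (δ : ℝ) (x : Fin (d + 2) → ℝ)
    (hx0 : -1 ≤ x 0) (hxlast : x (Fin.last (d + 1)) ≤ 1)
    (hmono : StrictMono x)
    (halt : ∀ i : Fin (d + 1),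
      (f (x i.castSucc) - p.eval (x i.castSucc)) * (f (x i.succ) - p.eval (x i.succ)) < 0)
    (hbig : ∀ i : Fin (d + 2), δ ≤ |f (x i) - p.eval (x i)|)
    (q : Polynomial ℝ) (hq : q.natDegree ≤ d) :
    ∃ y ∈ Set.Icc (-1 : ℝ) 1, δ ≤ |f y - q.eval y| := by
  by_contra! hclose
  have hx_mem : ∀ i, x i ∈ Set.Icc (-1 : ℝ) 1 := fun i =>
    ⟨hx0.trans (hmono.monotone (Fin.zero_le i)), (hmono.monotone (Fin.le_last i)).trans hxlast⟩
  have hsign : ∀ i, 0 < (f (x i) - p.eval (x i)) * (q - p).eval (x i) := fun i => by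
    simpa [sub_sub_sub_cancel_left] using
      mul_sub_pos_of_abs_lt ((hclose _ (hx_mem i)).trans_le (hbig i))
  have hdiff_alt : ∀ i : Fin (d + 1),
      (q - p).eval (x i.castSucc) * (q - p).eval (x i.succ) < 0 := fun i => by
    nlinarith [mul_pos (hsign i.castSucc) (hsign i.succ), halt i]
  have hlow := (q - p).le_natDegree_of_sign_alternating hmono hdiff_alt
  have hhigh := (natDegree_sub_le q p).trans (max_le hq hp)
  omega

/-- de la Vallée-Poussin: if the error `f - p` alternates in sign at `d+2` points of `[-1,1]`
with magnitude at least `δ` at each, then no polynomial of degree at most `d` approximates `f`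
on `[-1,1]` better than `δ`. -/
theorem de_la_vallee_poussin (f : ℝ → ℝ) (d : ℕ) (p : Polynomial ℝ)
    (hp : p.natDegree ≤ d) (δ : ℝ) (hδ : 0 < δ) (x : Fin (d + 2) → ℝ)
    (hx0 : -1 ≤ x 0) (hxlast : x (Fin.last (d + 1)) ≤ 1)
    (hmono : StrictMono x)
    (halt : ∀ i : Fin (d + 1),
      (f (x i.castSucc) - p.eval (x i.castSucc)) * (f (x i.succ) - p.eval (x i.succ)) < 0)
    (hbig : ∀ i : Fin (d + 2), δ ≤ |f (x i) - p.eval (x i)|)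
    (q : Polynomial ℝ) (hq : q.natDegree ≤ d) :
    ∃ y ∈ Set.Icc (-1 : ℝ) 1, δ ≤ |f y - q.eval y| :=
  de_la_vallee_poussin_general f d p hp δ x hx0 hxlast hmono halt hbig q hq
end

section
/- Let d be a nonnegative integer and let p be a real polynomial of degree at most d such that |p(x)| ≤ 1 for all x ∈ [-1,1]. Then for every real y with |y| > 1, we have |p(y)| ≤ |T_d(y)|. -/
/-!
Lagrange interpolation at the extrema `cos (kπ/d)` of `T_d`, where `T_d = ±1` with alternating
signs, writes `p(x)` for `x ≥ 1` as a combination of the values of `p` at these points whose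
coefficients alternate in sign in the same way; hence `|p(x)| ≤ T_d(x)` (Mathlib's
`eval_iterate_derivative_le_of_forall_abs_le_one` with `k = 0`). Negative arguments reduce to
this through `x ↦ -x`, which preserves the hypotheses and `|T_d|`.
-/

open Polynomial Polynomial.Chebyshev

theorem abs_eval_le_eval_T_of_one_le {n : ℕ} {P : ℝ[X]} (hdeg : P.natDegree ≤ n)
    (hbdd : ∀ x ∈ Set.Icc (-1 : ℝ) 1, |P.eval x| ≤ 1) {x : ℝ} (hx : 1 ≤ x) :
    |P.eval x| ≤ (T ℝ n).eval x := by
  rw [natDegree_le_iff_degree_le] at hdeg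
  refine abs_le'.2 ⟨eval_iterate_derivative_le_of_forall_abs_le_one (k := 0) hx hdeg hbdd, ?_⟩
  simpa using eval_iterate_derivative_le_of_forall_abs_le_one (k := 0) (P := -P) hx
    (by rwa [degree_neg]) (by simpa using hbdd)

/-- A polynomial of degree at most `d` bounded by `1` on `[-1,1]` is dominated outside `[-1,1]`
by the Chebyshev polynomial `T_d`. -/
theorem chebyshev_extremal_growth (d : ℕ) (p : Polynomial ℝ) (hp : p.natDegree ≤ d)
    (hbdd : ∀ x ∈ Set.Icc (-1 : ℝ) 1, |p.eval x| ≤ 1) (y : ℝ) (hy : 1 < |y|) :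
    |p.eval y| ≤ |(Polynomial.Chebyshev.T ℝ (d : ℤ)).eval y| := by
  rcases le_or_gt 0 y with hy₀ | hy₀
  · rw [abs_of_nonneg hy₀] at hy
    exact (abs_eval_le_eval_T_of_one_le hp hbdd hy.le).trans (le_abs_self _)
  rw [abs_of_neg hy₀] at hy
  have hdeg : (p.comp (-X)).natDegree ≤ d := by
    simpa [natDegree_comp] using hp
  have hbdd' : ∀ x ∈ Set.Icc (-1 : ℝ) 1, |(p.comp (-X)).eval x| ≤ 1 := fun x hx => by
    simpa using hbdd (-x) ⟨neg_le_neg hx.2, neg_le.1 hx.1⟩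
  have := (abs_eval_le_eval_T_of_one_le hdeg hbdd' hy.le).trans (le_abs_self _)
  simpa [T_eval_neg, abs_mul] using this
end

section
/- For every nonnegative integer s and every real x, the average of Chebyshev polynomials over all ±1 sign sequences of length s recovers the monomial: 2^{-s} · Σ_{y ∈ {-1,1}^s} T_{y_1 + y_2 + ... + y_s}(x) = x^s. Equivalently, if Y_1,...,Y_s are i.i.d. random variables taking values +1 and -1 each with probability 1/2 and D_s = Y_1 + ... + Y_s, then E[T_{D_s}(x)] = x^s. -/
lemma cheb_avg (x : ℝ) (n : ℤ) :
    (Polynomial.Chebyshev.T ℝ (n + 1)).eval x + (Polynomial.Chebyshev.T ℝ (n - 1)).eval x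
      = 2 * x * (Polynomial.Chebyshev.T ℝ n).eval x := by
  have h := Polynomial.Chebyshev.T_add_two ℝ (n - 1)
  have h1 : n - 1 + 2 = n + 1 := by ring
  have h2 : n - 1 + 1 = n := by ring
  rw [h1, h2] at h
  rw [h]
  simp only [Polynomial.eval_sub, Polynomial.eval_mul, Polynomial.eval_ofNat, Polynomial.eval_X]
  ring

/-- Averaging Chebyshev polynomials over all `±1` sign sequences of length `s` recovers the
monomial: `2⁻ˢ · Σ_{y ∈ {-1,1}^s} T_{y₁+⋯+yₛ}(x) = xˢ`. -/
theorem expectation_chebyshev_random_walk (s : ℕ) (x : ℝ) :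
    (2 : ℝ) ^ (-(s : ℤ)) *
      ∑ σ : Fin s → Bool,
        (Polynomial.Chebyshev.T ℝ (∑ i, if σ i then (1 : ℤ) else -1)).eval x = x ^ s := by
  induction s with
  | zero => simp [Polynomial.Chebyshev.T_zero]
  | succ s ih =>
    set F : (Fin (s + 1) → Bool) → ℝ := fun σ =>
      (Polynomial.Chebyshev.T ℝ (∑ i, if σ i then (1 : ℤ) else -1)).eval x with hF
    have hsum : ∑ σ : Fin (s + 1) → Bool, F σ
        = 2 * x * ∑ σ : Fin s → Bool,
            (Polynomial.Chebyshev.T ℝ (∑ i, if σ i then (1 : ℤ) else -1)).eval x := by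
      rw [← Fintype.sum_equiv (Fin.consEquiv fun _ => Bool)
        (fun p => F ((Fin.consEquiv fun _ => Bool) p)) F (fun p => rfl)]
      rw [Fintype.sum_prod_type, Fintype.sum_bool, ← Finset.sum_add_distrib, Finset.mul_sum]
      refine Finset.sum_congr rfl fun σ _ => ?_
      have key : ∀ b : Bool, (∑ i : Fin (s + 1),
          (if (Fin.consEquiv fun _ => Bool) (b, σ) i then (1 : ℤ) else -1))
          = (if b then (1 : ℤ) else -1) + ∑ i : Fin s, (if σ i then (1 : ℤ) else -1) := by
        intro b
        rw [Fin.sum_univ_succ]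
        simp [Fin.consEquiv]
      simp only [hF, key true, key false]
      set D := ∑ i : Fin s, (if σ i then (1 : ℤ) else -1)
      have e1 : (1 : ℤ) + D = D + 1 := by ring
      have e2 : (-1 : ℤ) + D = D - 1 := by ring
      simp only [if_true, Bool.false_eq_true, if_false, e1, e2]
      exact cheb_avg x D
    rw [hsum]
    set S := ∑ σ : Fin s → Bool,
        (Polynomial.Chebyshev.T ℝ (∑ i, if σ i then (1 : ℤ) else -1)).eval x
    have h2 : (2 : ℝ) ^ (-((s : ℕ) + 1 : ℤ)) = 2⁻¹ * 2 ^ (-(s : ℤ)) := by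
      rw [← zpow_neg_one, ← zpow_add₀ (by norm_num : (2:ℝ) ≠ 0)]; ring_nf
    push_cast
    rw [h2]
    calc 2⁻¹ * 2 ^ (-(s:ℤ)) * (2 * x * S) = x * (2 ^ (-(s:ℤ)) * S) := by ring
      _ = x * x ^ s := by rw [ih]
      _ = x ^ (s + 1) := by ring
end

section
/- For all positive integers s and d, define the polynomial p_{s,d}(x) := 2^{-s} · Σ_{y ∈ {-1,1}^s, |y_1 + ... + y_s| ≤ d} T_{y_1 + ... + y_s}(x). Then p_{s,d} has degree at most d and satisfies sup_{x ∈ [-1,1]} |p_{s,d}(x) - x^s| ≤ 2·e^{-d²/(2s)}. In particular, for every δ > 0 and every d ≥ ⌈√(2s·log(2/δ))⌉, sup_{x ∈ [-1,1]} |p_{s,d}(x) - x^s| ≤ δ. -/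
/-!
Iterating `2x·Tₙ = Tₙ₊₁ + Tₙ₋₁` gives `(2x)ˢ = ∑_y T_{y₁+⋯+yₛ}(x)` over all `2ˢ` sign vectors, so
`p_{s,d}(x) - xˢ` is `-2⁻ˢ` times the same sum over the sign vectors with `|y₁+⋯+yₛ| > d`.
Since `|Tₙ| ≤ 1` on `[-1,1]`, the error is at most the proportion of those sign vectors, which the
Chernoff bound `∑_y e^{t(y₁+⋯+yₛ)} = (2 cosh t)ˢ ≤ 2ˢ e^{st²/2}` with `t = d/s` makes
at most `2e^{-d²/(2s)}`.
-/

open Finset Polynomial Polynomial.Chebyshev Real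

def signSum {ι : Type*} [Fintype ι] (σ : ι → Bool) : ℤ :=
  ∑ i, if σ i then 1 else -1

lemma signSum_cons {s : ℕ} (b : Bool) (τ : Fin s → Bool) :
    signSum (Fin.cons b τ : Fin (s + 1) → Bool) = (if b then 1 else -1) + signSum τ := by
  simp [signSum, Fin.sum_univ_succ]

lemma sum_T_add_signSum (R : Type*) [CommRing R] (s : ℕ) (m : ℤ) :
    ∑ σ : Fin s → Bool, T R (m + signSum σ) = (2 * X) ^ s * T R m := by
  induction s generalizing m with
  | zero => simp [signSum]
  | succ s ih =>
    rw [← (Fin.consEquiv fun _ => Bool).sum_comp, Fintype.sum_prod_type, Fintype.sum_bool]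
    simp only [Fin.consEquiv, Equiv.coe_fn_mk, signSum_cons, if_true, Bool.false_eq_true, if_false,
      ← add_assoc, ih, ← sub_eq_add_neg]
    linear_combination (2 * X) ^ s * T_add_one R m

lemma sum_T_signSum (R : Type*) [CommRing R] (s : ℕ) :
    ∑ σ : Fin s → Bool, T R (signSum σ) = (2 * X) ^ s := by
  simpa using sum_T_add_signSum R s 0

lemma mul_signSum_eq_sum {ι : Type*} [Fintype ι] (σ : ι → Bool) (t : ℝ) :
    t * signSum σ = ∑ i, if σ i then t else -t := by
  simp [signSum, mul_sum, apply_ite]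

section Hoeffding

variable {ι : Type*} [Fintype ι] [DecidableEq ι]

lemma sum_exp_mul_signSum (t : ℝ) :
    ∑ σ : ι → Bool, exp (t * signSum σ) = (2 * cosh t) ^ Fintype.card ι := by
  calc ∑ σ : ι → Bool, exp (t * signSum σ)
      = ∑ σ : ι → Bool, ∏ i, exp (if σ i then t else -t) := by
        simp only [← exp_sum, mul_signSum_eq_sum]
    _ = ∏ _i : ι, ∑ b : Bool, exp (if b then t else -t) :=
        (Fintype.prod_sum fun (_ : ι) (b : Bool) => exp (if b then t else -t)).symm
    _ = (2 * cosh t) ^ Fintype.card ι := by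
        simp [cosh_eq, mul_div_cancel₀]

lemma card_filter_le_abs_signSum_le_mul_exp (a : ℝ) {t : ℝ} (ht : 0 ≤ t) :
    (#{σ : ι → Bool | a ≤ |(signSum σ : ℝ)|} : ℝ)
      ≤ 2 * (2 * cosh t) ^ Fintype.card ι * exp (-(t * a)) := by
  have markov : ∀ σ : ι → Bool, a ≤ |(signSum σ : ℝ)| →
      1 ≤ exp (t * signSum σ) * exp (-(t * a)) + exp (-t * signSum σ) * exp (-(t * a)) := by
    intro σ hσ
    simp only [← exp_add]
    rcases le_abs.mp hσ with h | h
    · linarith [one_le_exp (by nlinarith : 0 ≤ t * signSum σ + -(t * a)),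
        exp_pos (-t * signSum σ + -(t * a))]
    · linarith [one_le_exp (by nlinarith : 0 ≤ -t * signSum σ + -(t * a)),
        exp_pos (t * signSum σ + -(t * a))]
  calc (#{σ : ι → Bool | a ≤ |(signSum σ : ℝ)|} : ℝ)
      ≤ ∑ σ : ι → Bool, (exp (t * signSum σ) * exp (-(t * a))
          + exp (-t * signSum σ) * exp (-(t * a))) := by
        rw [card_filter]
        push_cast
        refine sum_le_sum fun σ _ => ?_
        split_ifs with h
        · exact markov σ h
        · positivity
    _ = 2 * (2 * cosh t) ^ Fintype.card ι * exp (-(t * a)) := by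
        rw [sum_add_distrib, ← sum_mul, ← sum_mul, sum_exp_mul_signSum, sum_exp_mul_signSum,
          cosh_neg]
        ring

lemma card_filter_le_abs_signSum_le (hι : 0 < Fintype.card ι) {a : ℝ} (ha : 0 ≤ a) :
    (#{σ : ι → Bool | a ≤ |(signSum σ : ℝ)|} : ℝ)
      ≤ 2 * 2 ^ Fintype.card ι * exp (-a ^ 2 / (2 * Fintype.card ι)) := by
  set n : ℝ := (Fintype.card ι : ℝ)
  have hn : 0 < n := Nat.cast_pos.mpr hι
  refine (card_filter_le_abs_signSum_le_mul_exp a (div_nonneg ha hn.le : 0 ≤ a / n)).trans ?_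
  calc 2 * (2 * cosh (a / n)) ^ Fintype.card ι * exp (-(a / n * a))
      ≤ 2 * (2 * exp ((a / n) ^ 2 / 2)) ^ Fintype.card ι * exp (-(a / n * a)) := by
        gcongr
        exact cosh_le_exp_half_sq _
    _ = 2 * 2 ^ Fintype.card ι * exp (-a ^ 2 / (2 * n)) := by
        rw [mul_pow, ← exp_nat_mul, mul_assoc, mul_assoc (2 ^ _), ← exp_add, ← mul_assoc]
        congr 2
        field_simp
        ring

end Hoeffding

lemma card_compl_filter_abs_signSum_le {s : ℕ} (hs : 0 < s) (d : ℕ) :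
    (#(univ.filter fun σ : Fin s → Bool => |signSum σ| ≤ (d : ℤ))ᶜ : ℝ)
      ≤ 2 * 2 ^ s * exp (-(d : ℝ) ^ 2 / (2 * s)) := by
  have hsub : (univ.filter fun σ : Fin s → Bool => |signSum σ| ≤ (d : ℤ))ᶜ
      ⊆ ({σ : Fin s → Bool | (d : ℝ) ≤ |(signSum σ : ℝ)|} : Finset _) := by
    rw [compl_filter]
    exact monotone_filter_right _ fun σ _ hσ => by exact_mod_cast (not_le.mp hσ).le
  simpa using (Nat.cast_le.mpr (card_le_card hsub)).trans
    (card_filter_le_abs_signSum_le (ι := Fin s) (by simpa using hs) d.cast_nonneg)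

lemma abs_sum_eval_T_signSum_sub_pow_le (s : ℕ) (A : Finset (Fin s → Bool)) {x : ℝ}
    (hx : |x| ≤ 1) :
    |(2 : ℝ) ^ (-(s : ℤ)) * ∑ σ ∈ A, (T ℝ (signSum σ)).eval x - x ^ s|
      ≤ (2 : ℝ) ^ (-(s : ℤ)) * #Aᶜ := by
  have hpow : x ^ s = (2 : ℝ) ^ (-(s : ℤ)) * ∑ σ : Fin s → Bool, (T ℝ (signSum σ)).eval x := by
    have := congrArg (eval x) (sum_T_signSum ℝ s)
    rw [eval_finsetSum] at this
    rw [this, eval_pow, zpow_neg, zpow_natCast]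
    simp [mul_pow]
  rw [hpow, ← sum_add_sum_compl A, mul_add, sub_add_cancel_left, abs_neg, abs_mul,
    abs_of_pos (by positivity)]
  gcongr
  refine (abs_sum_le_sum_abs _ _).trans ?_
  simpa using sum_le_sum fun σ (_ : σ ∈ Aᶜ) => abs_eval_T_real_le_one (signSum σ) hx

lemma two_mul_exp_neg_sq_div_le {n δ a : ℝ} (hn : 0 < n) (hδ : 0 < δ)
    (ha : √(2 * n * log (2 / δ)) ≤ a) :
    2 * exp (-a ^ 2 / (2 * n)) ≤ δ := by
  have hlog : log (2 / δ) ≤ a ^ 2 / (2 * n) := by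
    rw [le_div_iff₀ (by positivity)]
    linarith [(sqrt_le_iff.mp ha).2]
  calc 2 * exp (-a ^ 2 / (2 * n)) ≤ 2 * exp (-log (2 / δ)) := by
        gcongr
        rw [neg_div]
        exact neg_le_neg hlog
    _ = δ := by
        rw [exp_neg, exp_log (by positivity)]
        field_simp

theorem monomial_approx_by_low_degree_general (s d : ℕ) (hs : 0 < s)
    (p : Polynomial ℝ)
    (hp : p = (2 : ℝ) ^ (-(s : ℤ)) •
      ∑ σ ∈ univ.filter
          (fun σ : Fin s → Bool => |∑ i, if σ i then (1 : ℤ) else -1| ≤ (d : ℤ)),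
        Polynomial.Chebyshev.T ℝ (∑ i, if σ i then (1 : ℤ) else -1)) :
    p.natDegree ≤ d ∧
    (∀ x ∈ Set.Icc (-1 : ℝ) 1,
      |p.eval x - x ^ s| ≤ 2 * Real.exp (-(d : ℝ) ^ 2 / (2 * s))) ∧
    (∀ δ : ℝ, 0 < δ → ⌈Real.sqrt (2 * s * Real.log (2 / δ))⌉ ≤ (d : ℤ) →
      ∀ x ∈ Set.Icc (-1 : ℝ) 1, |p.eval x - x ^ s| ≤ δ) := by
  have hdeg : p.natDegree ≤ d := by
    rw [hp]
    refine (natDegree_smul_le _ _).trans (natDegree_sum_le_of_forall_le _ _ fun σ hσ => ?_)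
    rw [natDegree_T]
    have := abs_le.mp (mem_filter.mp hσ).2
    omega
  have herr : ∀ x ∈ Set.Icc (-1 : ℝ) 1, |p.eval x - x ^ s| ≤ 2 * exp (-(d : ℝ) ^ 2 / (2 * s)) := by
    intro x hx
    rw [hp, eval_smul, smul_eq_mul, eval_finsetSum]
    refine (abs_sum_eval_T_signSum_sub_pow_le s _ (abs_le.mpr hx)).trans ?_
    calc (2 : ℝ) ^ (-(s : ℤ)) * _
        ≤ (2 : ℝ) ^ (-(s : ℤ)) * (2 * 2 ^ s * exp (-(d : ℝ) ^ 2 / (2 * s))) := by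
          gcongr
          exact card_compl_filter_abs_signSum_le hs d
      _ = 2 * exp (-(d : ℝ) ^ 2 / (2 * s)) := by
          rw [zpow_neg, zpow_natCast]
          field_simp
  refine ⟨hdeg, herr, fun δ hδ hceil x hx => (herr x hx).trans ?_⟩
  exact two_mul_exp_neg_sq_div_le (by positivity) hδ (Int.ceil_le.mp hceil)

open Finset in
/-- The truncated Chebyshev expansion `p_{s,d}` of `x^s` has degree at most `d` and approximates
`x^s` on `[-1,1]` up to `2·exp(-d²/(2s))`; in particular up to `δ` once
`d ≥ ⌈√(2s·log(2/δ))⌉`. -/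
theorem monomial_approx_by_low_degree (s d : ℕ) (hs : 0 < s) (hd : 0 < d)
    (p : Polynomial ℝ)
    (hp : p = (2 : ℝ) ^ (-(s : ℤ)) •
      ∑ σ ∈ univ.filter
          (fun σ : Fin s → Bool => |∑ i, if σ i then (1 : ℤ) else -1| ≤ (d : ℤ)),
        Polynomial.Chebyshev.T ℝ (∑ i, if σ i then (1 : ℤ) else -1)) :
    p.natDegree ≤ d ∧
    (∀ x ∈ Set.Icc (-1 : ℝ) 1,
      |p.eval x - x ^ s| ≤ 2 * Real.exp (-(d : ℝ) ^ 2 / (2 * s))) ∧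
    (∀ δ : ℝ, 0 < δ → ⌈Real.sqrt (2 * s * Real.log (2 / δ))⌉ ≤ (d : ℤ) →
      ∀ x ∈ Set.Icc (-1 : ℝ) 1, |p.eval x - x ^ s| ≤ δ) :=
  monomial_approx_by_low_degree_general s d hs p hp
end

section
/- There exists an absolute constant C > 0 such that for every real b > 0 and every δ ∈ (0,1], there exists a real polynomial r of degree at most C·√(max{b, log(1/δ)} · log(1/δ)) satisfying sup_{x ∈ [0,b]} |e^{-x} - r(x)| ≤ δ. -/
/-!
Substituting `x = (b/2)(1 + y)` with `y ∈ [-1, 1]` gives `e^{-x} = e^{-b/2} e^{-(b/2) y}`.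
Truncating the Taylor series of `e^{-(b/2) y}` after `n = O(b + log(1/δ))` terms costs at most
`δ/2`. Each monomial `(2y)^s = ∑_{i+j=s} C(s,i) T_{j-i}(y)` is a binomial average of Chebyshev
polynomials, all bounded by `1` on `[-1, 1]`, so by the Chernoff bound for the symmetric random walk,
dropping the terms with `|j - i| > d` changes `(2y)^s` by at most `2^{s+1} e^{-d²/2n}`.
With `d ≈ √(2 n log(1/δ))` the total error is at most `δ`, and the degree is
`d = O(√(max(b, log(1/δ)) log(1/δ)))`.
-/

open Polynomial Finset Real
open scoped Nat

theorem Real.sum_antidiagonal_choose_mul_exp (s : ℕ) (t : ℝ) :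
    ∑ ij ∈ antidiagonal s, (s.choose ij.1 : ℝ) * exp (t * ((ij.2 : ℝ) - ij.1)) =
      (exp (-t) + exp t) ^ s := by
  rw [(Commute.all _ _).add_pow']
  refine sum_congr rfl fun ij _ => ?_
  rw [nsmul_eq_mul, ← exp_nat_mul, ← exp_nat_mul, ← exp_add]
  ring_nf

/-- Chernoff's method, with the exponential moment at `t = a / N` and `cosh t ≤ exp (t² / 2)`. -/
theorem Real.sum_antidiagonal_filter_choose_le (s : ℕ) {a N : ℝ} (ha : 0 ≤ a) (hN : 0 < N)
    (hsN : s ≤ N) :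
    ∑ ij ∈ (antidiagonal s).filter (fun ij => a ≤ |(ij.2 : ℝ) - ij.1|), (s.choose ij.1 : ℝ) ≤
      2 ^ (s + 1) * exp (-a ^ 2 / (2 * N)) := by
  set t := a / N
  have ht : 0 ≤ t := by positivity
  have hmoment : ∀ u : ℝ, a ≤ |u| → 1 ≤ exp (-(t * a)) * (exp (t * u) + exp (-t * u)) := by
    intro u hu
    rw [mul_add, ← exp_add, ← exp_add, ← exp_zero]
    rcases le_total 0 u with h | h
    · rw [abs_of_nonneg h] at hu
      exact le_add_of_le_of_nonneg (exp_le_exp.mpr (by nlinarith)) (exp_pos _).le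
    · rw [abs_of_nonpos h] at hu
      exact le_add_of_nonneg_of_le (exp_pos _).le (exp_le_exp.mpr (by nlinarith))
  have hcosh : exp (-t) + exp t ≤ 2 * exp (t ^ 2 / 2) := by
    have := cosh_le_exp_half_sq t
    rw [cosh_eq] at this
    linarith
  have hexponent : N * (t ^ 2 / 2) - t * a = -a ^ 2 / (2 * N) := by
    simp only [t]; field_simp; ring
  calc ∑ ij ∈ (antidiagonal s).filter (fun ij => a ≤ |(ij.2 : ℝ) - ij.1|), (s.choose ij.1 : ℝ)
      ≤ ∑ ij ∈ antidiagonal s, (s.choose ij.1 : ℝ) * (exp (-(t * a)) *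
          (exp (t * ((ij.2 : ℝ) - ij.1)) + exp (-t * ((ij.2 : ℝ) - ij.1)))) := by
        rw [sum_filter]
        refine sum_le_sum fun ij _ => ?_
        split_ifs with h
        · exact le_mul_of_one_le_right (by positivity) (hmoment _ h)
        · positivity
    _ = exp (-(t * a)) * (2 * (exp (-t) + exp t) ^ s) := by
        simp_rw [mul_left_comm _ (exp _), ← mul_sum, mul_add, sum_add_distrib,
          sum_antidiagonal_choose_mul_exp, neg_neg, add_comm (exp t)]
        ring
    _ ≤ exp (-(t * a)) * (2 * (2 * exp (t ^ 2 / 2)) ^ s) := by gcongr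
    _ = 2 ^ (s + 1) * exp (s * (t ^ 2 / 2) - t * a) := by
        rw [mul_pow, ← exp_nat_mul, sub_eq_neg_add, exp_add]; ring
    _ ≤ 2 ^ (s + 1) * exp (-a ^ 2 / (2 * N)) := by
        rw [← hexponent]
        gcongr

namespace Polynomial.Chebyshev

variable (R : Type*) [CommRing R]

theorem two_mul_X_mul_T (m : ℤ) : 2 * X * T R m = T R (m + 1) + T R (m - 1) := by
  rw [T_add_one]; ring

theorem two_mul_X_pow_eq_sum_T (s : ℕ) :
    (2 * X : R[X]) ^ s = ∑ ij ∈ antidiagonal s, (s.choose ij.1 : R[X]) * T R (ij.2 - ij.1) := by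
  induction s with
  | zero => simp
  | succ s ih =>
    rw [sum_antidiagonal_choose_succ_mul (fun i j => T R ((j : ℤ) - i)), pow_succ', ih, mul_sum]
    simp_rw [← sum_add_distrib]
    refine sum_congr rfl fun ij hij => ?_
    rw [Nat.choose_symm_of_eq_add (mem_antidiagonal.mp hij).symm, mul_left_comm, two_mul_X_mul_T,
      mul_add]
    push_cast
    ring_nf

noncomputable def twoMulXPowTrunc (s d : ℕ) : R[X] :=
  ∑ ij ∈ (antidiagonal s).filter (fun ij => ((ij.2 : ℤ) - ij.1).natAbs ≤ d),
    (s.choose ij.1 : R[X]) * T R (ij.2 - ij.1)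

theorem natDegree_twoMulXPowTrunc_le [IsDomain R] [NeZero (2 : R)] (s d : ℕ) :
    (twoMulXPowTrunc R s d).natDegree ≤ d := by
  refine natDegree_sum_le_of_forall_le _ _ fun ij hij => natDegree_mul_le.trans ?_
  rw [natDegree_natCast, natDegree_T, zero_add]
  exact (mem_filter.mp hij).2

theorem abs_two_mul_pow_sub_eval_twoMulXPowTrunc_le (s d : ℕ) {N : ℝ} (hN : 0 < N)
    (hsN : s ≤ N) {y : ℝ} (hy : |y| ≤ 1) :
    |(2 * y) ^ s - (twoMulXPowTrunc ℝ s d).eval y| ≤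
      2 ^ (s + 1) * exp (-(d : ℝ) ^ 2 / (2 * N)) := by
  have hpow : (2 * y) ^ s = ((2 * X : ℝ[X]) ^ s).eval y := by simp
  rw [hpow, two_mul_X_pow_eq_sum_T, twoMulXPowTrunc, ← sum_filter_add_sum_filter_not _
    (fun ij => ((ij.2 : ℤ) - ij.1).natAbs ≤ d), ← eval_sub, add_sub_cancel_left, eval_finsetSum]
  refine (abs_sum_le_sum_abs _ _).trans <| le_trans ?_ <|
    sum_antidiagonal_filter_choose_le s (Nat.cast_nonneg d) hN hsN
  calc _ ≤ ∑ ij ∈ (antidiagonal s).filter (fun ij => ¬((ij.2 : ℤ) - ij.1).natAbs ≤ d),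
        (s.choose ij.1 : ℝ) := by
        refine sum_le_sum fun ij _ => ?_
        rw [eval_mul, eval_natCast, abs_mul, Nat.abs_cast]
        exact mul_le_of_le_one_right (Nat.cast_nonneg _) (abs_eval_T_real_le_one _ hy)
    _ ≤ _ := by
        refine sum_le_sum_of_subset_of_nonneg (fun ij hij => ?_) fun _ _ _ => Nat.cast_nonneg _
        simp only [mem_filter, not_le] at hij ⊢
        refine ⟨hij.1, ?_⟩
        have : (d : ℝ) < |(((ij.2 : ℤ) - ij.1 : ℤ) : ℝ)| := by
          rw [← Int.cast_abs, ← Nat.cast_natAbs]; exact_mod_cast hij.2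
        push_cast at this
        exact this.le

end Polynomial.Chebyshev

theorem Real.pow_div_factorial_le_exp_neg {x : ℝ} (hx : 0 ≤ x) {n : ℕ} (h : exp 2 * x ≤ n) :
    x ^ n / n ! ≤ exp (-n) := by
  have hx' : x ≤ n * exp (-2) := by
    rw [exp_neg, ← div_eq_mul_inv, le_div_iff₀ (exp_pos 2)]; linarith
  calc x ^ n / n ! ≤ (n * exp (-2)) ^ n / n ! := by gcongr
    _ = (n : ℝ) ^ n / n ! * exp (-(2 * n)) := by
        rw [mul_pow, ← exp_nat_mul]; ring_nf
    _ ≤ exp n * exp (-(2 * n)) := by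
        gcongr; exact pow_div_factorial_le_exp _ (Nat.cast_nonneg n) n
    _ = exp (-n) := by rw [← exp_add]; ring_nf

theorem Real.abs_exp_sub_sum_range_le {u : ℝ} {n : ℕ} (h : exp 2 * |u| ≤ n) :
    |exp u - ∑ m ∈ range n, u ^ m / m !| ≤ 2 * exp (-n) := by
  have htwo : (2 : ℝ) ≤ exp 2 := by linarith [add_one_le_exp (2 : ℝ)]
  have hsmall : ‖(u : ℂ)‖ / n.succ ≤ 1 / 2 := by
    rw [Complex.norm_real, Real.norm_eq_abs, div_le_iff₀ (by positivity)]
    push_cast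
    nlinarith [abs_nonneg u]
  have hbound := Complex.exp_bound' hsmall
  rw [Complex.norm_real, Real.norm_eq_abs] at hbound
  calc |exp u - ∑ m ∈ range n, u ^ m / m !| ≤ |u| ^ n / n ! * 2 := by exact_mod_cast hbound
    _ ≤ 2 * exp (-n) := by
        rw [mul_comm]; gcongr; exact pow_div_factorial_le_exp_neg (abs_nonneg u) h

/-- `exp (-l) * (-l / 2) ^ s / s ! * (2 * y) ^ s` is the `s`-th Taylor term of `exp (-(l * (1 + y)))`
in `y`; here `(2 * X) ^ s` is replaced by its Chebyshev truncation. -/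
noncomputable def expNegApprox (l : ℝ) (n d : ℕ) : ℝ[X] :=
  ∑ s ∈ range n, C (exp (-l) * (-l / 2) ^ s / s !) * Chebyshev.twoMulXPowTrunc ℝ s d

theorem natDegree_expNegApprox_le (l : ℝ) (n d : ℕ) : (expNegApprox l n d).natDegree ≤ d :=
  natDegree_sum_le_of_forall_le _ _ fun _ _ =>
    (natDegree_C_mul_le _ _).trans (Chebyshev.natDegree_twoMulXPowTrunc_le ℝ _ d)

theorem abs_exp_sub_eval_expNegApprox_le {l : ℝ} (hl : 0 ≤ l) {n : ℕ} (hn : exp 2 * l ≤ n)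
    (hn0 : 0 < n) (d : ℕ) {y : ℝ} (hy : |y| ≤ 1) :
    |exp (-(l * (1 + y))) - (expNegApprox l n d).eval y| ≤
      2 * exp (-n) + 2 * exp (-(d : ℝ) ^ 2 / (2 * n)) := by
  set E := exp (-(d : ℝ) ^ 2 / (2 * n))
  set c : ℕ → ℝ := fun s => exp (-l) * (-l / 2) ^ s / (s !)
  have hsplit : exp (-(l * (1 + y))) - (expNegApprox l n d).eval y =
      exp (-l) * (exp (-(l * y)) - ∑ s ∈ range n, (-(l * y)) ^ s / s !) +
        ∑ s ∈ range n, c s * ((2 * y) ^ s - (Chebyshev.twoMulXPowTrunc ℝ s d).eval y) := by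
    have hterm : ∀ s, c s * (2 * y) ^ s = exp (-l) * ((-(l * y)) ^ s / s !) := by
      intro s; simp only [c]; rw [div_mul_eq_mul_div, mul_assoc, ← mul_pow]; ring_nf
    simp only [expNegApprox, eval_finsetSum, eval_mul, eval_C, mul_sub, sum_sub_distrib, hterm,
      ← mul_sum, mul_add, mul_one, neg_add, exp_add]
    ring
  have htaylor :
      |exp (-(l * y)) - ∑ s ∈ range n, (-(l * y)) ^ s / s !| ≤ 2 * exp (-n) := by
    refine abs_exp_sub_sum_range_le (le_trans ?_ hn)
    rw [abs_neg, abs_mul, abs_of_nonneg hl]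
    gcongr
    exact mul_le_of_le_one_right hl hy
  have htrunc : ∀ s ∈ range n,
      |c s * ((2 * y) ^ s - (Chebyshev.twoMulXPowTrunc ℝ s d).eval y)| ≤
        2 * E * (exp (-l) * (l ^ s / s !)) := by
    intro s hs
    have hsn : (s : ℝ) ≤ n := by exact_mod_cast (mem_range.mp hs).le
    rw [abs_mul]
    calc |c s| * |(2 * y) ^ s - (Chebyshev.twoMulXPowTrunc ℝ s d).eval y|
        ≤ |c s| * (2 ^ (s + 1) * E) := by
          gcongr
          exact Chebyshev.abs_two_mul_pow_sub_eval_twoMulXPowTrunc_le s d (by positivity) hsn hy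
      _ = 2 * E * (exp (-l) * (l ^ s / s !)) := by
          simp only [c, abs_div, abs_mul, abs_pow, abs_neg, abs_of_nonneg hl, abs_exp,
            Nat.abs_cast, div_pow]
          field_simp
          ring
  have hpoisson : ∑ s ∈ range n, exp (-l) * (l ^ s / s !) ≤ 1 := by
    rw [← mul_sum, exp_neg]
    exact inv_mul_le_one_of_le₀ (sum_le_exp_of_nonneg hl n) (exp_pos l).le
  have hexp : exp (-l) ≤ 1 := exp_le_one_iff.mpr (neg_nonpos.mpr hl)
  rw [hsplit]
  calc _ ≤ exp (-l) * (2 * exp (-n)) + 2 * E * 1 := by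
        refine (abs_add_le _ _).trans (add_le_add ?_ ?_)
        · rw [abs_mul, abs_exp]
          gcongr
        · refine (abs_sum_le_sum_abs _ _).trans ((sum_le_sum htrunc).trans ?_)
          rw [← mul_sum]
          gcongr
    _ ≤ 1 * (2 * exp (-n)) + 2 * E * 1 := by gcongr
    _ = 2 * exp (-n) + 2 * E := by ring

theorem exists_natDegree_le_abs_exp_neg_sub_eval_le {b : ℝ} (hb : 0 < b) {n : ℕ}
    (hn : 4 * b ≤ n) (d : ℕ) : ∃ r : ℝ[X], r.natDegree ≤ d ∧ ∀ x ∈ Set.Icc 0 b,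
      |exp (-x) - r.eval x| ≤ 2 * exp (-n) + 2 * exp (-(d : ℝ) ^ 2 / (2 * n)) := by
  have hexp2 : exp 2 < 8 := by
    have := exp_one_lt_d9
    rw [show (2 : ℝ) = 1 + 1 by norm_num, exp_add]
    nlinarith [exp_pos 1]
  refine ⟨(expNegApprox (b / 2) n d).comp (C (2 / b) * X + C (-1)), ?_, fun x ⟨hx0, hxb⟩ => ?_⟩
  · refine natDegree_comp_le.trans ?_
    exact (Nat.mul_le_mul (natDegree_expNegApprox_le (b / 2) n d) natDegree_linear_le).trans_eq
      (mul_one d)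
  · have hy : |2 / b * x + -1| ≤ 1 := by
      have h0 : 0 ≤ 2 / b * x := by positivity
      have h2 : 2 / b * x ≤ 2 := by rw [div_mul_eq_mul_div, div_le_iff₀ hb]; linarith
      exact abs_le.mpr ⟨by linarith, by linarith⟩
    have hx : -x = -(b / 2 * (1 + (2 / b * x + -1))) := by field_simp; ring
    rw [eval_comp, hx]
    simpa using abs_exp_sub_eval_expNegApprox_le (by positivity) (by nlinarith)
      (by exact_mod_cast (by positivity : (0 : ℝ) < 4 * b).trans_le hn) d hy

theorem two_mul_exp_neg_le_half {δ t : ℝ} (hδ : 0 < δ) (ht : log (1 / δ) + 2 ≤ t) :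
    2 * exp (-t) ≤ δ / 2 := by
  have hexp2 : 4 ≤ exp 2 := by linarith [quadratic_le_exp_of_nonneg (zero_le_two : (0 : ℝ) ≤ 2)]
  have hδexp : exp (-t) ≤ δ * (exp 2)⁻¹ := by
    calc exp (-t) ≤ exp (-log (1 / δ) + -2) := exp_le_exp.mpr (by linarith)
      _ = δ * (exp 2)⁻¹ := by
          rw [exp_add, exp_neg, exp_neg, exp_log (by positivity), one_div, inv_inv]
  have : δ * (exp 2)⁻¹ ≤ δ / 4 := by
    rw [← div_eq_mul_inv]; gcongr
  linarith

theorem natCast_le_mul_sqrt_max_mul {b L : ℝ} (hL : 1 / 2 ≤ L) {n d : ℕ}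
    (hn : n ≤ 4 * b + L + 3) (hd : d ≤ √(2 * n * (L + 2)) + 1) :
    (d : ℝ) ≤ 13 * √(max b L * L) := by
  set M := max b L
  have hbM : b ≤ M := le_max_left _ _
  have hLM : L ≤ M := le_max_right _ _
  have hsq : √(2 * n * (L + 2)) ≤ 11 * √(M * L) := by
    rw [show 11 * √(M * L) = √(11 ^ 2 * (M * L)) by
      rw [Real.sqrt_mul (by norm_num : (0 : ℝ) ≤ 11 ^ 2) (M * L), Real.sqrt_sq (by norm_num)]]
    have : (0 : ℝ) ≤ n := n.cast_nonneg
    exact Real.sqrt_le_sqrt (by nlinarith)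
  have hLsq : L ≤ √(M * L) := by
    calc L = √(L * L) := (Real.sqrt_mul_self (by linarith)).symm
      _ ≤ √(M * L) := by gcongr
  linarith

/-- There is a polynomial of degree `O(√(max{b, log(1/δ)}·log(1/δ)))` that `δ`-approximates
`e^{-x}` uniformly on `[0, b]`. -/
theorem exp_poly_approx_upper_bound :
    ∃ C : ℝ, 0 < C ∧ ∀ b : ℝ, 0 < b → ∀ δ : ℝ, δ ∈ Set.Ioc (0 : ℝ) 1 →
      ∃ r : Polynomial ℝ,
        (r.natDegree : ℝ) ≤
          C * Real.sqrt (max b (Real.log (1 / δ)) * Real.log (1 / δ)) ∧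
        ∀ x ∈ Set.Icc (0 : ℝ) b, |Real.exp (-x) - r.eval x| ≤ δ := by
  refine ⟨13, by norm_num, fun b hb δ ⟨hδ0, hδ1⟩ => ?_⟩
  set L := log (1 / δ)
  rcases lt_or_ge (1 / 2) δ with hδ | hδ
  · refine ⟨C (1 / 2), by simp, fun x hx => ?_⟩
    have : exp (-x) ≤ 1 := exp_le_one_iff.mpr (neg_nonpos.mpr hx.1)
    rw [eval_C, abs_le]
    constructor <;> linarith [exp_pos (-x)]
  have hL : 1 / 2 ≤ L := by
    have : log 2 ≤ L := log_le_log (by norm_num) (by rw [le_div_iff₀ hδ0]; linarith)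
    linarith [log_two_gt_d9]
  set n := ⌈4 * b + L⌉₊ + 2
  set d := ⌈√(2 * n * (L + 2))⌉₊
  have hn : 4 * b + L + 2 ≤ n := by push_cast [n]; linarith [Nat.le_ceil (4 * b + L)]
  have hd : L + 2 ≤ (d : ℝ) ^ 2 / (2 * n) := by
    rw [le_div_iff₀ (by positivity)]
    nlinarith [Nat.le_ceil (√(2 * n * (L + 2))), sq_sqrt (by positivity : 0 ≤ 2 * n * (L + 2)),
      sqrt_nonneg (2 * n * (L + 2))]
  obtain ⟨r, hrdeg, hr⟩ := exists_natDegree_le_abs_exp_neg_sub_eval_le hb (n := n) (by linarith) d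
  refine ⟨r, (Nat.cast_le.mpr hrdeg).trans (natCast_le_mul_sqrt_max_mul hL (n := n) ?_ ?_),
    fun x hx => (hr x hx).trans ?_⟩
  · push_cast [n]; linarith [Nat.ceil_lt_add_one (by positivity : 0 ≤ 4 * b + L)]
  · exact (Nat.ceil_lt_add_one (by positivity)).le
  · have htaylor := two_mul_exp_neg_le_half hδ0 (t := n) (by linarith)
    have hchebyshev := two_mul_exp_neg_le_half hδ0 hd
    rw [neg_div]
    linarith
end

section
/- Let q be a real polynomial of degree at most d such that |q(x)| ≤ 1 for all x ∈ [-1,1]. Then |q'(1)| ≤ d², where q' denotes the derivative of q. -/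
open Polynomial Finset Real

namespace MarkovAux

lemma derivative_finset_prod {ι : Type*} [DecidableEq ι] (s : Finset ι) (f : ι → ℝ[X]) :
    derivative (∏ i ∈ s, f i) = ∑ i ∈ s, (∏ j ∈ s.erase i, f j) * derivative (f i) := by
  induction s using Finset.induction with
  | empty => simp
  | @insert a s ha ih =>
    have hsum : ∑ i ∈ s, (∏ j ∈ (insert a s).erase i, f j) * derivative (f i)
        = ∑ i ∈ s, f a * ((∏ j ∈ s.erase i, f j) * derivative (f i)) :=
      Finset.sum_congr rfl fun i hi => by
        rw [Finset.erase_insert_of_ne (ne_of_mem_of_not_mem hi ha).symm,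
          Finset.prod_insert (fun h => ha (Finset.mem_of_mem_erase h)), mul_assoc]
    rw [Finset.prod_insert ha, derivative_mul, ih, Finset.sum_insert ha,
      Finset.erase_insert ha, hsum, Finset.mul_sum]
    ring

lemma sign_prod {ι : Type*} [DecidableEq ι] (s : Finset ι) (f : ι → ℝ) (p : ι → Prop) [DecidablePred p]
    (h1 : ∀ l ∈ s, p l → f l ≤ 0) (h2 : ∀ l ∈ s, ¬ p l → 0 ≤ f l) :
    0 ≤ (-1 : ℝ) ^ #(s.filter p) * ∏ l ∈ s, f l := by
  induction s using Finset.induction with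
  | empty => simp
  | @insert a s ha ih =>
    have ih' := ih (fun l hl => h1 l (Finset.mem_insert_of_mem hl))
      (fun l hl => h2 l (Finset.mem_insert_of_mem hl))
    rw [Finset.filter_insert, Finset.prod_insert ha]
    by_cases hp : p a
    · rw [if_pos hp, Finset.card_insert_of_notMem (fun h => ha (Finset.mem_of_mem_filter a h)),
        pow_succ]
      have hfa : f a ≤ 0 := h1 a (Finset.mem_insert_self a s) hp
      calc (0:ℝ) ≤ ((-1) ^ #(s.filter p) * ∏ l ∈ s, f l) * (-f a) :=
            mul_nonneg ih' (neg_nonneg.2 hfa)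
        _ = (-1) ^ #(s.filter p) * -1 * (f a * ∏ l ∈ s, f l) := by ring
    · rw [if_neg hp]
      have hfa : 0 ≤ f a := h2 a (Finset.mem_insert_self a s) hp
      calc (0:ℝ) ≤ (f a) * ((-1) ^ #(s.filter p) * ∏ l ∈ s, f l) := mul_nonneg hfa ih'
        _ = (-1) ^ #(s.filter p) * (f a * ∏ l ∈ s, f l) := by ring

lemma U_eval_one : ∀ n : ℕ, (Polynomial.Chebyshev.U ℝ (n : ℤ)).eval 1 = n + 1 := by
  intro n
  induction n using Nat.twoStepInduction with
  | zero => simp [Polynomial.Chebyshev.U_zero]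
  | one => norm_num [Polynomial.Chebyshev.U_one]
  | more n ih1 ih2 =>
    have h : ((n + 2 : ℕ) : ℤ) = (n : ℤ) + 2 := by push_cast; ring
    rw [h, Polynomial.Chebyshev.U_add_two]
    have h1 : ((n + 1 : ℕ) : ℤ) = (n : ℤ) + 1 := by push_cast; ring
    rw [h1] at ih2
    simp only [eval_sub, eval_mul, eval_ofNat, eval_X, ih1, ih2]
    push_cast; ring

lemma degree_T_le : ∀ n : ℕ, (Polynomial.Chebyshev.T ℝ (n : ℤ)).degree ≤ n := by
  intro n
  induction n using Nat.twoStepInduction with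
  | zero => simpa [Polynomial.Chebyshev.T_zero] using Polynomial.degree_one_le
  | one => simpa [Polynomial.Chebyshev.T_one] using Polynomial.degree_X_le
  | more n ih1 ih2 =>
    have h : ((n + 2 : ℕ) : ℤ) = (n : ℤ) + 2 := by push_cast; ring
    have h1 : ((n + 1 : ℕ) : ℤ) = (n : ℤ) + 1 := by push_cast; ring
    rw [h, Polynomial.Chebyshev.T_add_two]
    refine (Polynomial.degree_sub_le _ _).trans ?_
    rw [h1] at ih2
    refine max_le ?_ (ih1.trans (by exact_mod_cast (by omega : n ≤ n + 2))) 
    refine (Polynomial.degree_mul_le _ _).trans ?_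
    have h2x : (2 * X : ℝ[X]).degree ≤ 1 := by
      refine (Polynomial.degree_mul_le _ _).trans ?_
      have h2c : (2 : ℝ[X]) = Polynomial.C 2 := (map_ofNat Polynomial.C 2).symm
      have : ((2 : ℝ[X])).degree ≤ 0 := by rw [h2c]; exact Polynomial.degree_C_le
      calc (2:ℝ[X]).degree + (X:ℝ[X]).degree ≤ 0 + 1 := add_le_add this Polynomial.degree_X_le
        _ = 1 := by norm_num
    calc (2 * X : ℝ[X]).degree + (Polynomial.Chebyshev.T ℝ ((n:ℤ)+1)).degree
        ≤ 1 + ((n+1 : ℕ) : WithBot ℕ) := add_le_add h2x ih2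
      _ ≤ ((n+2 : ℕ) : WithBot ℕ) := by exact_mod_cast (by omega : 1 + (n+1) ≤ n + 2)

end MarkovAux

namespace MarkovAux2

open MarkovAux Polynomial Finset Real

noncomputable def node (d : ℕ) (k : Fin (d+1)) : ℝ := Real.cos (k * π / d)

variable {d : ℕ}

lemma angle_mem (hd : 1 ≤ d) (k : Fin (d+1)) : (k:ℝ) * π / d ∈ Set.Icc 0 π := by
  have hd' : (0:ℝ) < d := by exact_mod_cast hd
  constructor
  · positivity
  · rw [div_le_iff₀ hd']
    have hk : (k:ℝ) ≤ d := by exact_mod_cast Nat.lt_succ_iff.1 k.isLt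
    nlinarith [Real.pi_pos]

lemma node_anti (hd : 1 ≤ d) {k l : Fin (d+1)} (h : k < l) : node d l < node d k := by
  have hd' : (0:ℝ) < d := by exact_mod_cast hd
  refine Real.strictAntiOn_cos (angle_mem hd k) (angle_mem hd l) ?_
  have hkl : (k:ℝ) < (l:ℝ) := by exact_mod_cast h
  have hpi := Real.pi_pos
  rw [div_lt_div_iff₀ hd' hd']
  exact mul_lt_mul_of_pos_right (mul_lt_mul_of_pos_right hkl hpi) hd' 

lemma node_zero (hd : 1 ≤ d) : node d 0 = 1 := by
  simp [node, Real.cos_zero]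

lemma node_injOn (hd : 1 ≤ d) : Set.InjOn (node d) ↑(univ : Finset (Fin (d+1))) := by
  intro k _ l _ h
  by_contra hne
  rcases lt_or_gt_of_ne hne with hlt | hlt
  · exact absurd h (ne_of_gt (node_anti hd hlt))
  · exact absurd h (ne_of_lt (node_anti hd hlt))

lemma node_mem_Icc (k : Fin (d+1)) : node d k ∈ Set.Icc (-1:ℝ) 1 :=
  ⟨Real.neg_one_le_cos _, Real.cos_le_one _⟩

lemma node_lt_one (hd : 1 ≤ d) {k : Fin (d+1)} (hk : k ≠ 0) : node d k < 1 := by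
  have : (0 : Fin (d+1)) < k := Fin.pos_iff_ne_zero.2 hk
  simpa [node_zero hd] using node_anti hd this

noncomputable def Bk (d : ℕ) (k : Fin (d+1)) : ℝ :=
  ((Lagrange.basis univ (node d) k).derivative).eval 1

lemma Bk_eq (d : ℕ) (k : Fin (d+1)) :
    Bk d k = ∑ j ∈ univ.erase k,
      (∏ l ∈ (univ.erase k).erase j, (node d k - node d l)⁻¹ * (1 - node d l)) *
        (node d k - node d j)⁻¹ := by
  simp only [Bk, Lagrange.basis, derivative_finset_prod, eval_finset_sum, eval_mul, eval_prod,
    Lagrange.basisDivisor, derivative_C_mul, derivative_sub, derivative_X, derivative_C,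
    sub_zero, mul_one, eval_C, eval_sub, eval_X, eval_one]

lemma deriv_interp (d : ℕ) (r : Fin (d+1) → ℝ) :
    ((Lagrange.interpolate univ (node d) r).derivative).eval 1 = ∑ k, r k * Bk d k := by
  simp only [Lagrange.interpolate_apply, derivative_sum, eval_finset_sum, derivative_C_mul,
    eval_mul, eval_C, Bk]

lemma Bk_zero_nonneg (hd : 1 ≤ d) : 0 ≤ Bk d 0 := by
  rw [Bk_eq]
  refine Finset.sum_nonneg fun j hj => ?_
  have hj0 : j ≠ 0 := (Finset.mem_erase.1 hj).1
  refine mul_nonneg (Finset.prod_nonneg fun l hl => ?_) ?_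
  · have hl0 : l ≠ 0 := (Finset.mem_erase.1 (Finset.mem_of_mem_erase hl)).1
    have h1 : 0 < 1 - node d l := by linarith [node_lt_one hd hl0]
    rw [node_zero hd]
    positivity
  · have h1 : 0 < 1 - node d j := by linarith [node_lt_one hd hj0]
    rw [node_zero hd]
    positivity

lemma filter_card (hd : 1 ≤ d) (k : Fin (d+1)) (hk : k ≠ 0) :
    #((((univ : Finset (Fin (d+1))).erase k).erase 0).filter (· < k)) = (k:ℕ) - 1 := by
  have : (((univ : Finset (Fin (d+1))).erase k).erase 0).filter (· < k)
      = Finset.Ioo 0 k := by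
    ext l
    simp only [Finset.mem_filter, Finset.mem_erase, Finset.mem_univ, and_true, Finset.mem_Ioo,
      Fin.pos_iff_ne_zero]
    constructor
    · rintro ⟨⟨hl0, _⟩, hlk⟩; exact ⟨hl0, hlk⟩
    · rintro ⟨hl0, hlk⟩; exact ⟨⟨hl0, ne_of_lt hlk⟩, hlk⟩
  rw [this, Fin.card_Ioo]
  simp

lemma Bk_sign (hd : 1 ≤ d) (k : Fin (d+1)) : |Bk d k| = (-1)^(k:ℕ) * Bk d k := by
  by_cases hk : k = 0
  · subst hk
    simp [abs_of_nonneg (Bk_zero_nonneg hd)]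
  · have hkpos : (0 : Fin (d+1)) < k := Fin.pos_iff_ne_zero.2 hk
    have hk1 : node d k < 1 := node_lt_one hd hk
    -- the sum collapses to the j = 0 term
    have h0mem : (0 : Fin (d+1)) ∈ univ.erase k := Finset.mem_erase.2 ⟨(Ne.symm hk), Finset.mem_univ _⟩
    have hBk : Bk d k =
        (∏ l ∈ ((univ.erase k).erase 0), (node d k - node d l)⁻¹ * (1 - node d l)) *
          (node d k - node d 0)⁻¹ := by
      rw [Bk_eq]
      refine Finset.sum_eq_single_of_mem 0 h0mem fun j hj hj0 => ?_
      have h0mem' : (0 : Fin (d+1)) ∈ (univ.erase k).erase j :=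
        Finset.mem_erase.2 ⟨Ne.symm hj0, h0mem⟩
      rw [Finset.prod_eq_zero h0mem', zero_mul]
      rw [node_zero hd]
      ring
    -- sign of the product
    have hprod : 0 ≤ (-1:ℝ)^((k:ℕ)-1) *
        ∏ l ∈ ((univ.erase k).erase 0), (node d k - node d l)⁻¹ * (1 - node d l) := by
      have := sign_prod ((univ.erase k).erase 0)
        (fun l => (node d k - node d l)⁻¹ * (1 - node d l)) (fun l => l < k)
        (fun l hl hlk => ?_) (fun l hl hlk => ?_)
      · rwa [filter_card hd k hk] at this
      · -- l < k : factor is ≤ 0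
        have hl0 : l ≠ 0 := (Finset.mem_erase.1 hl).1
        have h1 : 0 < 1 - node d l := by linarith [node_lt_one hd hl0]
        have h2 : node d k < node d l := node_anti hd hlk
        have h3 : (node d k - node d l)⁻¹ < 0 := inv_lt_zero.2 (by linarith)
        exact mul_nonpos_of_nonpos_of_nonneg (le_of_lt h3) (le_of_lt h1)
      · -- ¬ l < k : factor is ≥ 0
        have hlk' : k < l := lt_of_le_of_ne (not_lt.1 hlk)
          (Ne.symm ((Finset.mem_erase.1 (Finset.mem_of_mem_erase hl)).1))
        have hl0 : l ≠ 0 := (Finset.mem_erase.1 hl).1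
        have h1 : 0 < 1 - node d l := by linarith [node_lt_one hd hl0]
        have h2 : node d l < node d k := node_anti hd hlk'
        have h3 : 0 < (node d k - node d l)⁻¹ := by
          rw [inv_pos]; linarith
        exact le_of_lt (mul_pos h3 h1)
    have hinv : 0 ≤ -(node d k - node d 0)⁻¹ := by
      rw [node_zero hd]
      have : (node d k - 1)⁻¹ < 0 := inv_lt_zero.2 (by linarith)
      linarith
    have hkv : 1 ≤ (k:ℕ) := Nat.one_le_iff_ne_zero.2 (by
      intro h
      exact hk (Fin.ext (by simpa using h)))
    have hsign : 0 ≤ (-1:ℝ)^(k:ℕ) * Bk d k := by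
      have hpow : (-1:ℝ)^(k:ℕ) = (-1)^((k:ℕ)-1) * (-1) := by
        rw [← pow_succ, Nat.sub_add_cancel hkv]
      rw [hBk, hpow]
      calc (0:ℝ) ≤ ((-1:ℝ)^((k:ℕ)-1) *
          ∏ l ∈ ((univ.erase k).erase 0), (node d k - node d l)⁻¹ * (1 - node d l)) *
            (-(node d k - node d 0)⁻¹) := mul_nonneg hprod hinv
        _ = (-1:ℝ)^((k:ℕ)-1) * -1 *
            ((∏ l ∈ ((univ.erase k).erase 0), (node d k - node d l)⁻¹ * (1 - node d l)) *
              (node d k - node d 0)⁻¹) := by ring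
    have : |Bk d k| = |(-1:ℝ)^(k:ℕ) * Bk d k| := by
      rw [abs_mul, abs_pow, abs_neg, abs_one, one_pow, one_mul]
    rw [this, abs_of_nonneg hsign]

end MarkovAux2

namespace MarkovAux2
open MarkovAux Polynomial Finset Real

variable {d : ℕ}

lemma T_at_node (hd : 1 ≤ d) (k : Fin (d+1)) :
    (Polynomial.Chebyshev.T ℝ (d:ℤ)).eval (node d k) = (-1:ℝ)^(k:ℕ) := by
  have hd' : (d:ℝ) ≠ 0 := by
    have : (0:ℝ) < d := by exact_mod_cast hd
    exact ne_of_gt this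
  rw [node, Polynomial.Chebyshev.T_real_cos]
  have harg : ((d:ℤ):ℝ) * ((k:ℝ) * π / d) = (k:ℕ) * π := by
    push_cast
    field_simp
  rw [harg]
  have := Real.cos_add_int_mul_pi 0 ((k:ℕ):ℤ)
  simpa using this

lemma T_deriv_one (hd : 1 ≤ d) :
    ((Polynomial.Chebyshev.T ℝ (d:ℤ)).derivative).eval 1 = (d:ℝ)^2 := by
  rw [Polynomial.Chebyshev.T_derivative_eq_U]
  have h : (d:ℤ) - 1 = ((d - 1 : ℕ) : ℤ) := by omega
  rw [h]
  simp only [eval_mul, eval_intCast]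
  rw [U_eval_one]
  push_cast [Nat.cast_sub hd]
  ring

end MarkovAux2

/-- Endpoint case of Markov's theorem: a polynomial of degree at most `d` bounded by `1` on
`[-1,1]` satisfies `|q'(1)| ≤ d²`. -/
theorem markov_at_endpoint (d : ℕ) (q : Polynomial ℝ) (hq : q.natDegree ≤ d)
    (hbdd : ∀ x ∈ Set.Icc (-1 : ℝ) 1, |q.eval x| ≤ 1) :
    |q.derivative.eval 1| ≤ (d : ℝ) ^ 2 := by
  open Polynomial Finset in
  rcases Nat.eq_zero_or_pos d with hd | hd
  · subst hd
    have hc : q = Polynomial.C (q.coeff 0) := Polynomial.eq_C_of_natDegree_le_zero hq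
    rw [hc]
    simp
  · classical
    set v := MarkovAux2.node d with hv
    have hinj := MarkovAux2.node_injOn (d:=d) hd
    have hcard : #(univ : Finset (Fin (d+1))) = d + 1 := by simp
    have hqdeg : q.degree < (#(univ : Finset (Fin (d+1))) : ℕ) := by
      rw [hcard]
      calc q.degree ≤ (q.natDegree : WithBot ℕ) := Polynomial.degree_le_natDegree
        _ ≤ (d : WithBot ℕ) := by exact_mod_cast hq
        _ < ((d+1 : ℕ) : WithBot ℕ) := by exact_mod_cast Nat.lt_succ_self d
    have hq_interp := Lagrange.eq_interpolate hinj hqdeg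
    have hq' : q.derivative.eval 1 = ∑ k, q.eval (v k) * MarkovAux2.Bk d k := by
      conv_lhs => rw [hq_interp]
      exact MarkovAux2.deriv_interp d _
    have hT : Polynomial.Chebyshev.T ℝ (d:ℤ) =
        Lagrange.interpolate univ v (fun k => (-1:ℝ)^(k:ℕ)) := by
      refine Lagrange.eq_interpolate_of_eval_eq _ hinj ?_ fun k _ => MarkovAux2.T_at_node hd k
      rw [hcard]
      exact lt_of_le_of_lt (MarkovAux.degree_T_le d) (by exact_mod_cast Nat.lt_succ_self d)
    have hsum : ∑ k : Fin (d+1), (-1:ℝ)^(k:ℕ) * MarkovAux2.Bk d k = (d:ℝ)^2 := by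
      rw [← MarkovAux2.deriv_interp d, ← hT, MarkovAux2.T_deriv_one hd]
    calc |q.derivative.eval 1| = |∑ k, q.eval (v k) * MarkovAux2.Bk d k| := by rw [hq']
      _ ≤ ∑ k, |q.eval (v k) * MarkovAux2.Bk d k| := Finset.abs_sum_le_sum_abs _ _
      _ ≤ ∑ k, |MarkovAux2.Bk d k| := by
          refine Finset.sum_le_sum fun k _ => ?_
          rw [abs_mul]
          have h1 := hbdd (v k) (MarkovAux2.node_mem_Icc k)
          nlinarith [abs_nonneg (MarkovAux2.Bk d k), abs_nonneg (q.eval (v k))]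
      _ = ∑ k : Fin (d+1), (-1:ℝ)^(k:ℕ) * MarkovAux2.Bk d k :=
          Finset.sum_congr rfl fun k _ => MarkovAux2.Bk_sign hd k
      _ = (d:ℝ)^2 := hsum
end

section
/- For every real b ≥ 5 and every δ ∈ (0, 1/8], any real polynomial p satisfying sup_{x ∈ [0,b]} |e^{-x} - p(x)| ≤ δ must have degree at least (1/3)·√b. -/
/-!
On `[4, b]` the polynomial is bounded by `M = e⁻⁴ + δ < 29/200`, while `p 0 ≥ 1 - δ ≥ 7/8`.
Transporting `[4, b]` affinely onto `[-1, 1]`, the point `0` goes to `(u + u⁻¹) / 2` with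
`u = (√b + 2) / (√b - 2)`, and Chebyshev's extremal inequality `|q x| ≤ M · Tₙ(x)` for `x ≥ 1`,
together with `Tₙ((u + u⁻¹) / 2) ≤ uⁿ`, gives `7/8 ≤ M uⁿ`, i.e. `uⁿ > 6`.
But if `3n < √b` then `uⁿ < ((3n + 2) / (3n - 2))ⁿ ≤ exp (4n / (3n - 2))`, which is below `6`
once `n ≥ 3` (the cases `n ≤ 2` are checked directly).
-/

open Polynomial Real Set

namespace Polynomial.Chebyshev

theorem eval_T_real_half_add_inv (n : ℕ) {u : ℝ} (hu : 0 < u) :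
    (T ℝ n).eval ((u + u⁻¹) / 2) = (u ^ n + (u ^ n)⁻¹) / 2 := by
  have := T_real_cosh (log u) n
  rw [cosh_log hu] at this
  rw [this, cosh_eq, exp_neg, Int.cast_natCast, exp_nat_mul, exp_log hu]

theorem eval_T_real_half_add_inv_le (n : ℕ) {u : ℝ} (hu : 1 ≤ u) :
    (T ℝ n).eval ((u + u⁻¹) / 2) ≤ u ^ n := by
  have hun : 1 ≤ u ^ n := one_le_pow₀ hu
  rw [eval_T_real_half_add_inv n (by positivity)]
  linarith [inv_le_one_of_one_le₀ hun]

theorem abs_eval_le_mul_eval_T {n : ℕ} {P : ℝ[X]} {M : ℝ} (hM : 0 < M) (hdeg : P.degree ≤ n)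
    (hP : ∀ x ∈ Icc (-1) 1, |P.eval x| ≤ M) {x : ℝ} (hx : 1 ≤ x) :
    |P.eval x| ≤ M * (T ℝ n).eval x := by
  have key : ∀ Q : ℝ[X], Q.degree ≤ n → (∀ y ∈ Icc (-1) 1, |Q.eval y| ≤ M) →
      Q.eval x ≤ M * (T ℝ n).eval x := by
    intro Q hQdeg hQ
    have h := eval_iterate_derivative_le_of_forall_abs_le_one (k := 0) hx
      (P := Polynomial.C M⁻¹ * Q) (by rwa [degree_C_mul (inv_ne_zero hM.ne')]) fun y hy => by
        rw [eval_mul, eval_C, abs_mul, abs_inv, abs_of_pos hM, inv_mul_le_one₀ hM]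
        exact hQ y hy
    rw [Function.iterate_zero_apply, Function.iterate_zero_apply, eval_mul, eval_C,
      inv_mul_le_iff₀ hM] at h
    exact h
  have hneg := key (-P) (by rwa [degree_neg]) fun y hy => by rw [eval_neg, abs_neg]; exact hP y hy
  rw [eval_neg] at hneg
  exact abs_le.2 ⟨by linarith, key P hdeg hP⟩

theorem abs_eval_half_add_inv_le_mul_pow {n : ℕ} {P : ℝ[X]} {M : ℝ} (hM : 0 < M)
    (hdeg : P.degree ≤ n) (hP : ∀ x ∈ Icc (-1) 1, |P.eval x| ≤ M) {u : ℝ} (hu : 1 ≤ u) :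
    |P.eval ((u + u⁻¹) / 2)| ≤ M * u ^ n := by
  have hx : 1 ≤ (u + u⁻¹) / 2 := by rw [← cosh_log (by positivity)]; exact one_le_cosh _
  calc |P.eval ((u + u⁻¹) / 2)| ≤ M * (T ℝ n).eval ((u + u⁻¹) / 2) :=
        abs_eval_le_mul_eval_T hM hdeg hP hx
    _ ≤ M * u ^ n := by gcongr; exact eval_T_real_half_add_inv_le n hu

end Polynomial.Chebyshev

theorem Polynomial.abs_eval_zero_le_of_forall_mem_Icc {p : ℝ[X]} {a b M : ℝ} (ha : 0 < a)
    (hab : a < b) (hM : 0 < M) (hp : ∀ x ∈ Icc a b, |p.eval x| ≤ M) :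
    |p.eval 0| ≤ M * ((√b + √a) / (√b - √a)) ^ p.natDegree := by
  have hsa : 0 < √a := sqrt_pos.2 ha
  have hsab : √a < √b := sqrt_lt_sqrt ha.le hab
  have hsa2 : √a ^ 2 = a := sq_sqrt ha.le
  have hsb2 : √b ^ 2 = b := sq_sqrt (ha.trans hab).le
  set u := (√b + √a) / (√b - √a) with hu_def
  have hu : 1 ≤ u := by rw [le_div_iff₀ (by linarith)]; linarith
  set ℓ : ℝ[X] := C ((a - b) / 2) * X + C ((a + b) / 2)
  have hℓ : ∀ t, ℓ.eval t = (a - b) / 2 * t + (a + b) / 2 := by simp [ℓ]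
  have hdeg : (p.comp ℓ).degree ≤ p.natDegree := by
    refine degree_le_of_natDegree_le (natDegree_comp_le.trans ?_)
    exact (Nat.mul_le_mul_left _ natDegree_linear_le).trans (mul_one _).le
  have hbound : ∀ t ∈ Icc (-1) 1, |(p.comp ℓ).eval t| ≤ M := fun t ⟨ht₁, ht₂⟩ => by
    rw [eval_comp, hℓ]
    exact hp _ ⟨by nlinarith, by nlinarith⟩
  have hzero : ℓ.eval ((u + u⁻¹) / 2) = 0 := by
    have hne : √b - √a ≠ 0 := by linarith
    rw [hℓ, hu_def, inv_div, div_add_div _ _ hne (by linarith)]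
    field_simp
    linear_combination 4 * a * hsb2 - 4 * b * hsa2
  simpa [eval_comp, hzero] using Chebyshev.abs_eval_half_add_inv_le_mul_pow hM hdeg hbound hu

theorem Real.exp_neg_four_lt : exp (-4) < 1 / 50 := by
  rw [exp_neg, inv_lt_comm₀ (exp_pos _) (by norm_num), show (4 : ℝ) = (4 : ℕ) by norm_num,
    ← exp_one_pow]
  calc ((1 : ℝ) / 50)⁻¹ < 2.7182818283 ^ 4 := by norm_num
    _ < exp 1 ^ 4 := by gcongr; exact exp_one_gt_d9

theorem Real.exp_seven_div_four_lt : exp (7 / 4) < 6 := by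
  have h : exp (7 / 4) ^ 4 < 6 ^ 4 := by
    rw [← exp_nat_mul, show ((4 : ℕ) : ℝ) * (7 / 4) = (7 : ℕ) by norm_num, ← exp_one_pow]
    calc exp 1 ^ 7 < 2.7182818286 ^ 7 := by gcongr; exact exp_one_lt_d9
      _ < 6 ^ 4 := by norm_num
  exact lt_of_pow_lt_pow_left₀ 4 (by norm_num) h

theorem pow_three_mul_add_two_div_le_six {n : ℕ} (hn : n ≠ 0) :
    ((3 * n + 2) / (3 * n - 2) : ℝ) ^ n ≤ 6 := by
  obtain rfl | rfl | hn3 : n = 1 ∨ n = 2 ∨ 3 ≤ n := by omega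
  · norm_num
  · norm_num
  have hn3' : (3 : ℝ) ≤ n := by exact_mod_cast hn3
  have hden : (0 : ℝ) < 3 * n - 2 := by linarith
  calc ((3 * n + 2) / (3 * n - 2) : ℝ) ^ n = (4 / (3 * n - 2) + 1) ^ n := by
        congr 1; field_simp; ring
    _ ≤ exp (4 / (3 * n - 2)) ^ n := by gcongr; exact add_one_le_exp _
    _ = exp (n * (4 / (3 * n - 2))) := (exp_nat_mul _ n).symm
    _ ≤ exp (7 / 4) := by
        gcongr
        rw [← mul_div_assoc, div_le_div_iff₀ hden (by norm_num)]
        linarith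
    _ ≤ 6 := exp_seven_div_four_lt.le

theorem pow_div_sub_two_lt_six {s : ℝ} {n : ℕ} (hn : 3 * n < s) :
    ((s + 2) / (s - 2)) ^ n < 6 := by
  rcases eq_or_ne n 0 with rfl | hn0
  · norm_num
  have hn1 : (1 : ℝ) ≤ n := by exact_mod_cast Nat.one_le_iff_ne_zero.2 hn0
  have hlt : (s + 2) / (s - 2) < (3 * n + 2) / (3 * n - 2) := by
    rw [div_lt_div_iff₀ (by linarith) (by linarith)]
    nlinarith
  calc ((s + 2) / (s - 2)) ^ n < ((3 * n + 2) / (3 * n - 2)) ^ n :=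
        pow_lt_pow_left₀ hlt (div_nonneg (by linarith) (by linarith)) hn0
    _ ≤ 6 := pow_three_mul_add_two_div_le_six hn0

/-- Any polynomial `δ`-approximating `e^{-x}` on `[0, b]` with `b ≥ 5` and `δ ≤ 1/8`
must have degree at least `√b / 3`. -/
theorem exp_poly_approx_degree_lower_bound (b : ℝ) (hb : 5 ≤ b) (δ : ℝ)
    (hδ : δ ∈ Set.Ioc (0 : ℝ) (1 / 8)) (p : Polynomial ℝ)
    (happrox : ∀ x ∈ Set.Icc (0 : ℝ) b, |Real.exp (-x) - p.eval x| ≤ δ) :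
    (1 / 3 : ℝ) * Real.sqrt b ≤ (p.natDegree : ℝ) := by
  obtain ⟨hδ₀, hδ₈⟩ := hδ
  have hp₀ : 7 / 8 ≤ |p.eval 0| := by
    have h := happrox 0 ⟨le_rfl, by linarith⟩
    rw [neg_zero, exp_zero] at h
    linarith [(abs_le.1 h).2, le_abs_self (p.eval 0)]
  have hp : ∀ x ∈ Icc 4 b, |p.eval x| ≤ exp (-4) + δ := fun x ⟨hx₄, hxb⟩ => by
    have h := happrox x ⟨by linarith, hxb⟩
    have h₄ : exp (-x) ≤ exp (-4) := exp_le_exp.2 (by linarith)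
    linarith [abs_sub_abs_le_abs_sub (p.eval x) (exp (-x)), abs_sub_comm (p.eval x) (exp (-x)),
      abs_of_pos (exp_pos (-x))]
  have hgrowth := abs_eval_zero_le_of_forall_mem_Icc (by norm_num) (by linarith)
    (by positivity) hp
  rw [show √(4 : ℝ) = 2 by rw [show (4 : ℝ) = 2 ^ 2 by norm_num, sqrt_sq zero_le_two]] at hgrowth
  have hs : 2 < √b := by rw [lt_sqrt zero_le_two]; linarith
  by_contra! hdeg
  have hsmall : (exp (-4) + δ) * ((√b + 2) / (√b - 2)) ^ p.natDegree < 29 / 200 * 6 :=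
    mul_lt_mul'' (by linarith [exp_neg_four_lt]) (pow_div_sub_two_lt_six (by linarith))
      (by positivity) (pow_nonneg (div_nonneg (by linarith) (by linarith)) _)
  linarith
end

section
/- Let S_d(x) := Σ_{k=0}^{d} x^k / k! denote the degree-d truncation of the Taylor series of e^x. There exist constants C > 0 and c ∈ (0,1) such that for every nonnegative integer d, sup_{x ∈ [0,∞)} |1/S_d(x) - e^{-x}| ≤ C·c^d. (Note that S_d(x) > 0 for all x ≥ 0, so 1/S_d(x) is well-defined, and in fact 0 ≤ 1/S_d(x) - e^{-x} for all x ≥ 0.) -/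
/-!
For `x ≤ d/4` the error `1/S_d(x) - e^{-x} = (e^x - S_d(x)) / (S_d(x) e^x)` is at most the first
omitted Taylor term `x^{d+1}/(d+1)!`, which is `≤ (e/4)^{d+1}` by `n^n/n! ≤ e^n`. For `x ≥ d/4`
the error is at most `1/S_d(x)`, and comparing `S_d(x)` termwise with the binomial expansion of
`(1 + 1/4)^d` gives `1/S_d(x) ≤ (4/5)^d`. Since `e/4 < 4/5`, the theorem holds with `C = 1`,
`c = 4/5`.
-/

open Finset Real
open scoped Nat

theorem exp_sub_sum_range_le {x : ℝ} (hx : 0 ≤ x) (n : ℕ) :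
    exp x - ∑ k ∈ range n, x ^ k / k ! ≤ x ^ n / n ! * exp x := by
  have hexp : HasSum (fun k ↦ x ^ k / k !) (exp x) := by
    rw [exp_eq_exp_ℝ]
    exact NormedSpace.expSeries_div_hasSum_exp x
  have hterm (k : ℕ) : x ^ (k + n) / (k + n)! ≤ x ^ n / n ! * (x ^ k / k !) := by
    rw [div_mul_div_comm, ← pow_add, add_comm n k]
    gcongr
    exact_mod_cast Nat.le_of_dvd (k + n).factorial_pos
      (add_comm n k ▸ Nat.factorial_mul_factorial_dvd_factorial_add n k)
  calc exp x - ∑ k ∈ range n, x ^ k / k !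
      = ∑' k, x ^ (k + n) / (k + n)! := by
        rw [← hexp.tsum_eq, ← hexp.summable.sum_add_tsum_nat_add n, add_sub_cancel_left]
    _ ≤ ∑' k, x ^ n / n ! * (x ^ k / k !) :=
        Summable.tsum_le_tsum hterm ((summable_nat_add_iff n).2 hexp.summable)
          (hexp.summable.mul_left _)
    _ = x ^ n / n ! * exp x := by rw [tsum_mul_left, hexp.tsum_eq]

theorem one_add_pow_le_sum_range {x y : ℝ} {n : ℕ} (hy : 0 ≤ y) (hxy : n * y ≤ x) :
    (1 + y) ^ n ≤ ∑ k ∈ range (n + 1), x ^ k / k ! := by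
  rw [add_comm, add_pow]
  refine sum_le_sum fun k _ ↦ ?_
  calc y ^ k * 1 ^ (n - k) * (n.choose k : ℝ)
      ≤ y ^ k * (n ^ k / k !) := by
        rw [one_pow, mul_one]
        exact mul_le_mul_of_nonneg_left (Nat.choose_le_pow_div k n) (by positivity)
    _ = (n * y) ^ k / k ! := by ring
    _ ≤ x ^ k / k ! := by gcongr

theorem one_le_sum_range {x : ℝ} (hx : 0 ≤ x) (n : ℕ) :
    1 ≤ ∑ k ∈ range (n + 1), x ^ k / k ! := by
  simpa using one_add_pow_le_sum_range le_rfl (n := n) (by simpa using hx)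

theorem one_div_sum_range_sub_exp_neg_le {x : ℝ} (hx : 0 ≤ x) (n : ℕ) :
    1 / (∑ k ∈ range (n + 1), x ^ k / k !) - exp (-x) ≤ x ^ (n + 1) / (n + 1)! := by
  set S := ∑ k ∈ range (n + 1), x ^ k / (k !)
  have hS : 1 ≤ S := one_le_sum_range hx n
  have hSE : S ≤ exp x := sum_le_exp_of_nonneg hx _
  calc 1 / S - exp (-x) = (exp x - S) / (S * exp x) := by
        rw [exp_neg]
        field_simp
    _ ≤ (exp x - S) / exp x := by
        gcongr
        exact le_mul_of_one_le_left (exp_pos x).le hS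
    _ ≤ x ^ (n + 1) / (n + 1)! := by
        rw [div_le_iff₀ (exp_pos x)]
        exact exp_sub_sum_range_le hx (n + 1)

theorem mul_pow_div_factorial_le {a : ℝ} (ha : 0 ≤ a) (n : ℕ) :
    (n * a) ^ n / n ! ≤ (a * exp 1) ^ n := by
  rw [mul_pow, mul_pow, mul_comm ((n : ℝ) ^ n), mul_div_assoc, ← exp_nat_mul, mul_one]
  exact mul_le_mul_of_nonneg_left (pow_div_factorial_le_exp _ n.cast_nonneg n) (by positivity)

open Finset in
/-- The reciprocal of the degree-`d` Taylor truncation `S_d` of `e^x` approximates `e^{-x}` on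
`[0, ∞)` up to an error decaying exponentially in `d`. -/
theorem inv_taylor_truncation_approx_exp :
    ∃ C : ℝ, 0 < C ∧ ∃ c : ℝ, c ∈ Set.Ioo (0 : ℝ) 1 ∧
      ∀ d : ℕ, ∀ x : ℝ, 0 ≤ x →
        0 < ∑ k ∈ range (d + 1), x ^ k / (Nat.factorial k) ∧
        0 ≤ 1 / (∑ k ∈ range (d + 1), x ^ k / (Nat.factorial k)) - Real.exp (-x) ∧
        |1 / (∑ k ∈ range (d + 1), x ^ k / (Nat.factorial k)) - Real.exp (-x)| ≤
          C * c ^ d := by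
  refine ⟨1, one_pos, 4 / 5, ⟨by norm_num, by norm_num⟩, fun d x hx ↦ ?_⟩
  set S := ∑ k ∈ range (d + 1), x ^ k / (k !)
  have hS : 0 < S := one_pos.trans_le (one_le_sum_range hx d)
  have herr : 0 ≤ 1 / S - exp (-x) := by
    rw [exp_neg, sub_nonneg, one_div]
    exact inv_anti₀ hS (sum_le_exp_of_nonneg hx _)
  refine ⟨hS, herr, ?_⟩
  rw [abs_of_nonneg herr, one_mul]
  rcases le_total (4 * x) d with hsmall | hlarge
  · have he : exp 1 / 4 ≤ 4 / 5 := by linarith [exp_one_lt_d9]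
    calc 1 / S - exp (-x) ≤ x ^ (d + 1) / (d + 1)! := one_div_sum_range_sub_exp_neg_le hx d
      _ ≤ ((d + 1 : ℕ) * (1 / 4)) ^ (d + 1) / (d + 1)! := by gcongr; push_cast; linarith
      _ ≤ (1 / 4 * exp 1) ^ (d + 1) := mul_pow_div_factorial_le (by norm_num) _
      _ ≤ (4 / 5) ^ (d + 1) := by gcongr; linarith
      _ ≤ (4 / 5) ^ d := pow_le_pow_of_le_one (by norm_num) (by norm_num) d.le_succ
  · have hbinom : (5 / 4 : ℝ) ^ d ≤ S := by
      convert one_add_pow_le_sum_range (x := x) (y := 1 / 4) (n := d) (by norm_num) (by linarith)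
        using 1
      norm_num
    calc 1 / S - exp (-x) ≤ 1 / S := sub_le_self _ (exp_pos _).le
      _ ≤ 1 / (5 / 4) ^ d := by gcongr
      _ = (4 / 5) ^ d := by rw [one_div, ← inv_pow]; norm_num
end

section
/- There exists d₀ such that for every integer d ≥ d₀ there is no real polynomial p of degree at most d satisfying: p(x) ≠ 0 and |e^{-x} - 1/p(x)| ≤ 50^{-d} for all x ∈ [0,∞). Equivalently, for all sufficiently large d, every degree-d real polynomial p that is nonvanishing on [0,∞) satisfies sup_{x ∈ [0,∞)} |e^{-x} - 1/p(x)| > 50^{-d}. -/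
open Finset Polynomial fwdDiff

private lemma fwdDiff_poly_eval (p : Polynomial ℝ) :
    fwdDiff (1:ℝ) (fun x => p.eval x) = fun x => (p.comp (X + C 1) - p).eval x := by
  funext x
  simp [fwdDiff, eval_comp]

private lemma fwdDiff_iter_poly_eval_zero :
    ∀ n : ℕ, ∀ p : Polynomial ℝ, p.natDegree < n →
      (fwdDiff (1:ℝ))^[n] (fun x => p.eval x) = fun _ => 0 := by
  intro n
  induction n with
  | zero => intro p hp; omega
  | succ n ih =>
    intro p hp
    rw [Function.iterate_succ_apply, fwdDiff_poly_eval]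
    by_cases h0 : p.natDegree = 0
    · obtain ⟨c, rfl⟩ := Polynomial.natDegree_eq_zero.mp h0
      have hq : (C c).comp (X + C 1) - C c = 0 := by simp
      rw [hq]
      simp only [eval_zero]
      exact Function.iterate_fixed (by funext x; simp [fwdDiff]) n
    · apply ih
      have hp0 : p ≠ 0 := fun h => h0 (by simp [h])
      have hn1 : (X + C (1:ℝ)).natDegree = 1 := Polynomial.natDegree_X_add_C 1
      have hl1 : (X + C (1:ℝ)).leadingCoeff = 1 := Polynomial.leadingCoeff_X_add_C 1
      have hlc : (p.comp (X + C 1)).leadingCoeff = p.leadingCoeff := by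
        rw [Polynomial.leadingCoeff_comp (by rw [hn1]; exact one_ne_zero), hl1, one_pow, mul_one]
      have hcomp0 : p.comp (X + C 1) ≠ 0 := by
        intro h
        apply hp0
        rw [← Polynomial.leadingCoeff_eq_zero, ← hlc, h, leadingCoeff_zero]
      have hdeg : (p.comp (X + C 1)).degree = p.degree := by
        rw [Polynomial.degree_eq_natDegree hcomp0, Polynomial.degree_eq_natDegree hp0,
          Polynomial.natDegree_comp, hn1, mul_one]
      have hlt : (p.comp (X + C 1) - p).degree < p.degree := by
        rw [← hdeg]; exact Polynomial.degree_sub_lt hdeg hcomp0 hlc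
      by_cases hq0 : p.comp (X + C 1) - p = 0
      · rw [hq0]; simp only [natDegree_zero]; omega
      · have := Polynomial.natDegree_lt_natDegree hq0 (by rw [← hdeg] at hlt; rw [hdeg] at hlt; exact hlt)
        omega

private lemma fwdDiff_iter_exp (n : ℕ) :
    (fwdDiff (1:ℝ))^[n] Real.exp = fun x => (Real.exp 1 - 1)^n * Real.exp x := by
  induction n with
  | zero => simp
  | succ n ih =>
    rw [Function.iterate_succ_apply', ih]
    funext x
    simp only [fwdDiff, Real.exp_add]
    ring

private lemma poly_sum_zero (n : ℕ) (p : Polynomial ℝ) (hp : p.natDegree < n) :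
    ∑ k ∈ range (n+1), (-1:ℝ)^(n-k) * (n.choose k) * p.eval (k:ℝ) = 0 := by
  have h1 := fwdDiff_iter_eq_sum_shift (1:ℝ) (fun x => p.eval x) n 0
  rw [fwdDiff_iter_poly_eval_zero n p hp] at h1
  simp only [zero_add, nsmul_eq_mul, mul_one, zsmul_eq_mul] at h1
  push_cast at h1
  rw [← h1]

private lemma exp_sum_eq (n : ℕ) :
    ∑ k ∈ range (n+1), (-1:ℝ)^(n-k) * (n.choose k) * Real.exp k = (Real.exp 1 - 1)^n := by
  have h1 := fwdDiff_iter_eq_sum_shift (1:ℝ) Real.exp n 0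
  rw [fwdDiff_iter_exp n] at h1
  simp only [zero_add, nsmul_eq_mul, mul_one, zsmul_eq_mul, Real.exp_zero] at h1
  push_cast at h1
  rw [← h1]

private lemma pow_bound1 : ∀ d : ℕ, 1 ≤ d → (2:ℝ) * 3^(d+1) ≤ 50^d := by
  intro d hd
  induction d with
  | zero => omega
  | succ m ih =>
    rcases Nat.eq_or_lt_of_le hd with h | h
    · norm_num [← h]
    · have hm : 1 ≤ m := by omega
      have := ih hm
      have h3 : (0:ℝ) < 3 ^ (m+1) := by positivity
      calc (2:ℝ) * 3^(m+1+1) = 3 * (2 * 3^(m+1)) := by ring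
        _ ≤ 3 * 50^m := by linarith
        _ ≤ 50 * 50^m := by nlinarith [pow_nonneg (by norm_num : (0:ℝ) ≤ 50) m]
        _ = 50^(m+1) := by ring

private lemma pow_bound2 : ∀ d : ℕ, 1 ≤ d → (2:ℝ) * 8.4^(d+1) < 50^d * 1.7^(d+1) := by
  intro d hd
  induction d with
  | zero => omega
  | succ m ih =>
    rcases Nat.eq_or_lt_of_le hd with h | h
    · norm_num [← h]
    · have hm : 1 ≤ m := by omega
      have := ih hm
      have h3 : (0:ℝ) < 50^m * 1.7^(m+1) := by positivity
      calc (2:ℝ) * 8.4^(m+1+1) = 8.4 * (2 * 8.4^(m+1)) := by ring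
        _ < 8.4 * (50^m * 1.7^(m+1)) := by linarith
        _ ≤ 85 * (50^m * 1.7^(m+1)) := by linarith
        _ = 50^(m+1) * 1.7^(m+1+1) := by ring
/-- For all sufficiently large `d`, no rational function of the form `1 / p(x)` with `p` a
polynomial of degree at most `d` approximates `e^{-x}` on `[0, ∞)` within `50^{-d}`. -/
theorem exp_inv_poly_approx_lower_bound :
    ∃ d₀ : ℕ, ∀ d : ℕ, d₀ ≤ d →
      ¬ ∃ p : Polynomial ℝ, p.natDegree ≤ d ∧
        ∀ x : ℝ, 0 ≤ x →
          p.eval x ≠ 0 ∧ |Real.exp (-x) - 1 / p.eval x| ≤ (50 : ℝ) ^ (-(d : ℤ)) := by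
  refine ⟨1, fun d hd => ?_⟩
  rintro ⟨p, hdeg, h⟩
  set n := d + 1 with hn
  have hεeq : (50:ℝ)^(-(d:ℤ)) = ((50:ℝ)^d)⁻¹ := by
    rw [zpow_neg, zpow_natCast]
  set ε : ℝ := ((50:ℝ)^d)⁻¹ with hε
  have h50 : (0:ℝ) < 50^d := by positivity
  have hεpos : 0 < ε := by positivity
  have he_lo : (2.7:ℝ) ≤ Real.exp 1 := by
    have := Real.exp_one_gt_d9; linarith
  have he_hi : Real.exp 1 ≤ 2.72 := by
    have := Real.exp_one_lt_d9; linarith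
  -- pointwise error bound at integer points
  have key : ∀ k ∈ range (n+1), |p.eval (k:ℝ) - Real.exp (k:ℝ)| ≤ 2 * ε * (Real.exp 1^2)^k := by
    intro k hk
    have hk' : k ≤ d + 1 := by have := mem_range.mp hk; omega
    have hx : (0:ℝ) ≤ (k:ℝ) := Nat.cast_nonneg k
    obtain ⟨hne, happ⟩ := h (k:ℝ) hx
    rw [hεeq] at happ
    have hek : (0:ℝ) < Real.exp (k:ℝ) := Real.exp_pos _
    have hexpk : Real.exp (k:ℝ) = Real.exp 1 ^ k := by
      rw [← Real.exp_nat_mul, mul_one]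
    have hexp_le : Real.exp (k:ℝ) ≤ 3^(d+1) := by
      rw [hexpk]
      calc Real.exp 1 ^ k ≤ 3^k := pow_le_pow_left₀ (Real.exp_pos 1).le (by linarith) k
        _ ≤ 3^(d+1) := pow_le_pow_right₀ (by norm_num) hk'
    have hεe : 2 * ε * Real.exp (k:ℝ) ≤ 1 := by
      have h2 : 2 * Real.exp (k:ℝ) ≤ 50^d := by
        have := pow_bound1 d hd; linarith
      calc 2 * ε * Real.exp (k:ℝ) = (2 * Real.exp (k:ℝ)) * (50^d)⁻¹ := by rw [hε]; ring
        _ ≤ 50^d * (50^d)⁻¹ := mul_le_mul_of_nonneg_right h2 (by positivity)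
        _ = 1 := mul_inv_cancel₀ h50.ne'
    set A := |p.eval (k:ℝ)| with hA
    have hApos : 0 < A := abs_pos.mpr hne
    have hinv : |1 / p.eval (k:ℝ)| = A⁻¹ := by rw [abs_div, abs_one, one_div, hA]
    have hmk : Real.exp (-(k:ℝ)) = (Real.exp (k:ℝ))⁻¹ := Real.exp_neg _
    have hce : Real.exp (k:ℝ) * (Real.exp (k:ℝ))⁻¹ = 1 := mul_inv_cancel₀ hek.ne'
    have h3 : (Real.exp (k:ℝ))⁻¹ - ε ≤ A⁻¹ := by
      have h4 := abs_sub_abs_le_abs_sub (Real.exp (-(k:ℝ))) (1 / p.eval (k:ℝ))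
      rw [abs_of_pos (Real.exp_pos _), hinv, hmk] at h4
      rw [hmk] at happ
      linarith [happ]
    have hεsmall : ε ≤ (Real.exp (k:ℝ))⁻¹ / 2 := by
      nlinarith [hεe, hce, hek, hεpos]
    have h5 : A ≤ 2 * Real.exp (k:ℝ) := by
      have h6 : (Real.exp (k:ℝ))⁻¹ / 2 ≤ A⁻¹ := by linarith
      have hcA : A * A⁻¹ = 1 := mul_inv_cancel₀ hApos.ne'
      nlinarith [h6, hcA, hce, hApos, hek, inv_pos.mpr hek]
    have hid : p.eval (k:ℝ) - Real.exp (k:ℝ)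
        = p.eval (k:ℝ) * Real.exp (k:ℝ) * (Real.exp (-(k:ℝ)) - 1 / p.eval (k:ℝ)) := by
      rw [hmk]; field_simp
    rw [hid, abs_mul, abs_mul, abs_of_pos hek, ← hA]
    have hw : (2 * Real.exp (k:ℝ)) * Real.exp (k:ℝ) * ε = 2 * ε * (Real.exp 1^2)^k := by
      rw [hexpk]; ring
    rw [← hw]
    have hAe : A * Real.exp (k:ℝ) ≤ (2 * Real.exp (k:ℝ)) * Real.exp (k:ℝ) :=
      mul_le_mul_of_nonneg_right h5 hek.le
    exact mul_le_mul hAe happ (abs_nonneg _) (by positivity)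
  -- finite difference identities
  have hpsum := poly_sum_zero n p (by omega)
  have hesum := exp_sum_eq n
  have hdiff : (Real.exp 1 - 1)^n
      = ∑ k ∈ range (n+1), (-1:ℝ)^(n-k)*(n.choose k)*(Real.exp (k:ℝ) - p.eval (k:ℝ)) := by
    have hsplit : ∑ k ∈ range (n+1), (-1:ℝ)^(n-k)*(n.choose k)*(Real.exp (k:ℝ) - p.eval (k:ℝ))
        = ∑ k ∈ range (n+1), ((-1:ℝ)^(n-k)*(n.choose k)*Real.exp (k:ℝ)
            - (-1:ℝ)^(n-k)*(n.choose k)*p.eval (k:ℝ)) := by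
      apply Finset.sum_congr rfl; intros; ring
    rw [hsplit, Finset.sum_sub_distrib, hpsum, hesum, sub_zero]
  have habs : (Real.exp 1 - 1)^n ≤ 2 * ε * (Real.exp 1^2 + 1)^n := by
    have h1 : |(Real.exp 1 - 1)^n| ≤ ∑ k ∈ range (n+1), (n.choose k : ℝ) * (2*ε*(Real.exp 1^2)^k) := by
      rw [hdiff]
      refine (Finset.abs_sum_le_sum_abs _ _).trans ?_
      apply Finset.sum_le_sum
      intro k hk
      rw [abs_mul, abs_mul]
      have h2 : |(-1:ℝ)^(n-k)| = 1 := by rw [abs_pow, abs_neg, abs_one, one_pow]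
      rw [h2, one_mul, Nat.abs_cast]
      have h3 := key k hk
      rw [abs_sub_comm] at h3
      exact mul_le_mul_of_nonneg_left h3 (Nat.cast_nonneg _)
    have h3 : ∑ k ∈ range (n+1), (n.choose k:ℝ) * (2*ε*(Real.exp 1^2)^k)
        = 2*ε*(Real.exp 1^2+1)^n := by
      rw [add_pow, Finset.mul_sum]
      apply Finset.sum_congr rfl
      intro k _
      rw [one_pow]; ring
    have h4 : (0:ℝ) ≤ (Real.exp 1 - 1)^n := pow_nonneg (by linarith) n
    calc (Real.exp 1 - 1)^n = |(Real.exp 1 - 1)^n| := (abs_of_nonneg h4).symm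
      _ ≤ _ := h1.trans (le_of_eq h3)
  -- numeric contradiction
  have hub : (1.7:ℝ)^n ≤ (Real.exp 1 - 1)^n := pow_le_pow_left₀ (by norm_num) (by linarith) n
  have hub2 : (Real.exp 1^2 + 1)^n ≤ (8.4:ℝ)^n :=
    pow_le_pow_left₀ (by positivity) (by nlinarith [he_hi, he_lo]) n
  have hchain : (1.7:ℝ)^n ≤ 2 * ε * 8.4^n := by
    calc (1.7:ℝ)^n ≤ (Real.exp 1 - 1)^n := hub
      _ ≤ 2 * ε * (Real.exp 1^2 + 1)^n := habs
      _ ≤ 2 * ε * 8.4^n := mul_le_mul_of_nonneg_left hub2 (by positivity)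
  have hfin : (50:ℝ)^d * 1.7^n ≤ 2 * 8.4^n := by
    calc (50:ℝ)^d * 1.7^n ≤ 50^d * (2*ε*8.4^n) := mul_le_mul_of_nonneg_left hchain h50.le
      _ = 2*8.4^n * (50^d * ε) := by ring
      _ = 2*8.4^n := by rw [hε, mul_inv_cancel₀ h50.ne', mul_one]
  have := pow_bound2 d hd
  rw [hn] at hfin
  linarith
end

section
/- (Euler–Maclaurin formula) Let g : ℝ → ℝ be 2N times continuously differentiable, let a < b be reals, let h > 0 be such that K := (b-a)/h is a positive integer, and let N be a positive integer. Define the trapezoidal sum T := (h/2)·Σ_{j=0}^{K-1} ( g(a+jh) + g(a+(j+1)h) ). Then ∫_a^b g(y) dy − T = h^{2N+1} ∫_0^K ( B_{2N}(y − ⌊y⌋)/(2N)! )·g^{(2N)}(a + yh) dy − Σ_{j=1}^{N} ( b_{2j}/(2j)! )·h^{2j}·( g^{(2j-1)}(b) − g^{(2j-1)}(a) ). -/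
/-!
On `[0, 1]`, integrating `Bₘ(y) / m! * f⁽ᵐ⁾(y)` by parts against its antiderivative
`Bₘ₊₁(y) / (m + 1)!` raises the order by one at the cost of the boundary terms
`Bₘ₊₁(1) f⁽ᵐ⁾(1) - Bₘ₊₁(0) f⁽ᵐ⁾(0)`. The first step (`m = 0`) produces the trapezoidal
average, since `B₁(1) = -B₁(0) = 1/2`; afterwards `Bₘ₊₁(0) = Bₘ₊₁(1) = bₘ₊₁`, which vanishes
for odd `m + 1`, so going from order `2j` to `2j + 2` contributes only
`b₂ⱼ₊₂ / (2j + 2)! * Δ f⁽²ʲ⁺¹⁾`. On `[k, k + 1]` the same holds with the periodic kernel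
`B₂ₙ(fract y)`; summing over `k` telescopes the boundary terms, and the substitution
`y ↦ a + y h` produces the powers of `h`.
-/

open Finset intervalIntegral MeasureTheory
open scoped Nat Interval

theorem integral_bernoulliFun_mul_iteratedDeriv {f : ℝ → ℝ} {m : ℕ}
    (hf : ContDiff ℝ (m + 1) f) :
    ∫ y in (0 : ℝ)..1, bernoulliFun m y / m ! * iteratedDeriv m f y =
      (bernoulliFun (m + 1) 1 * iteratedDeriv m f 1 -
          bernoulliFun (m + 1) 0 * iteratedDeriv m f 0) / (m + 1)! -
        ∫ y in (0 : ℝ)..1, bernoulliFun (m + 1) y / (m + 1)! * iteratedDeriv (m + 1) f y := by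
  have hu (y : ℝ) : HasDerivAt (fun y ↦ bernoulliFun (m + 1) y / (m + 1)!)
      (bernoulliFun m y / m !) y := by
    refine ((hasDerivAt_bernoulliFun (m + 1) y).div_const ((m + 1)! : ℝ)).congr_deriv ?_
    rw [Nat.factorial_succ, Nat.add_sub_cancel]
    push_cast
    field_simp
  have hv (y : ℝ) : HasDerivAt (iteratedDeriv m f) (iteratedDeriv (m + 1) f y) y := by
    rw [iteratedDeriv_succ]
    exact ((hf.differentiable_iteratedDeriv m (by norm_cast; omega)) y).hasDerivAt
  have hparts := integral_mul_deriv_eq_deriv_mul (fun y _ ↦ hu y) (fun y _ ↦ hv y)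
    (((continuous_bernoulliFun m).div_const _).intervalIntegrable 0 1)
    ((hf.continuous_iteratedDeriv (m + 1) le_rfl).intervalIntegrable 0 1)
  rw [hparts]
  ring

theorem integral_bernoulliFun_mul_iteratedDeriv_of_ne_zero {f : ℝ → ℝ} {m : ℕ} (hm : m ≠ 0)
    (hf : ContDiff ℝ (m + 1) f) :
    ∫ y in (0 : ℝ)..1, bernoulliFun m y / m ! * iteratedDeriv m f y =
      (bernoulli (m + 1) : ℝ) / (m + 1)! * (iteratedDeriv m f 1 - iteratedDeriv m f 0) -
        ∫ y in (0 : ℝ)..1, bernoulliFun (m + 1) y / (m + 1)! * iteratedDeriv (m + 1) f y := by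
  rw [integral_bernoulliFun_mul_iteratedDeriv hf,
    bernoulliFun_endpoints_eq_of_ne_one (by omega), bernoulliFun_eval_zero]
  ring

noncomputable def eulerMaclaurinCorrection (f : ℝ → ℝ) (N : ℕ) (a b : ℝ) : ℝ :=
  ∑ j ∈ Icc 1 N, (bernoulli (2 * j) : ℝ) / (2 * j)! *
    (iteratedDeriv (2 * j - 1) f b - iteratedDeriv (2 * j - 1) f a)

theorem eulerMaclaurinCorrection_succ (f : ℝ → ℝ) (N : ℕ) (a b : ℝ) :
    eulerMaclaurinCorrection f (N + 1) a b = eulerMaclaurinCorrection f N a b +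
      (bernoulli (2 * N + 2) : ℝ) / (2 * N + 2)! *
        (iteratedDeriv (2 * N + 1) f b - iteratedDeriv (2 * N + 1) f a) := by
  rw [eulerMaclaurinCorrection, sum_Icc_succ_top (by omega)]
  rfl

theorem eulerMaclaurinCorrection_add (f : ℝ → ℝ) (N : ℕ) (a b c : ℝ) :
    eulerMaclaurinCorrection f N a b + eulerMaclaurinCorrection f N b c =
      eulerMaclaurinCorrection f N a c := by
  simp only [eulerMaclaurinCorrection, ← sum_add_distrib]
  refine sum_congr rfl fun j _ ↦ ?_
  ring

theorem neg_integral_bernoulliFun_one_mul_deriv {f : ℝ → ℝ} {N : ℕ} (hN : 1 ≤ N)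
    (hf : ContDiff ℝ (2 * N : ℕ) f) :
    -∫ y in (0 : ℝ)..1, bernoulliFun 1 y / 1 ! * iteratedDeriv 1 f y =
      (∫ y in (0 : ℝ)..1, bernoulliFun (2 * N) y / (2 * N)! * iteratedDeriv (2 * N) f y) -
        eulerMaclaurinCorrection f N 0 1 := by
  induction N, hN using Nat.le_induction with
  | base =>
    rw [integral_bernoulliFun_mul_iteratedDeriv_of_ne_zero one_ne_zero hf,
      eulerMaclaurinCorrection]
    simp
  | succ N hN ih =>
    have hodd : bernoulli (2 * N + 1) = 0 :=
      bernoulli_eq_zero_of_odd (odd_two_mul_add_one N) (by omega)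
    rw [ih (hf.of_le (by norm_cast; omega)), eulerMaclaurinCorrection_succ,
      show 2 * (N + 1) = 2 * N + 1 + 1 by ring,
      integral_bernoulliFun_mul_iteratedDeriv_of_ne_zero (by omega)
        (hf.of_le (by norm_cast; omega)),
      integral_bernoulliFun_mul_iteratedDeriv_of_ne_zero (by omega) (hf.of_le (by norm_cast)),
      hodd]
    push_cast
    ring

theorem euler_maclaurin_zero_one {f : ℝ → ℝ} {N : ℕ} (hN : 0 < N)
    (hf : ContDiff ℝ (2 * N : ℕ) f) :
    (∫ y in (0 : ℝ)..1, f y) - (f 0 + f 1) / 2 =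
      (∫ y in (0 : ℝ)..1, bernoulliFun (2 * N) y / (2 * N)! * iteratedDeriv (2 * N) f y) -
        eulerMaclaurinCorrection f N 0 1 := by
  have h := integral_bernoulliFun_mul_iteratedDeriv (m := 0) (hf.of_le (by norm_cast; omega))
  simp only [zero_add, bernoulliFun_zero, Nat.factorial_zero, Nat.cast_one, div_one, one_mul,
    iteratedDeriv_zero] at h
  rw [← neg_integral_bernoulliFun_one_mul_deriv hN hf, h, bernoulliFun_one 1, bernoulliFun_one 0]
  norm_num
  ring

theorem ae_fract_eq_sub_of_mem_uIoc (k : ℤ) :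
    ∀ᵐ y : ℝ, y ∈ Ι (k : ℝ) (k + 1) → Int.fract y = y - k := by
  filter_upwards [volume.ae_ne ((k : ℝ) + 1)] with y hne hy
  rw [Set.uIoc_of_le (by linarith)] at hy
  rw [Int.fract_eq_iff]
  exact ⟨by linarith [hy.1], by linarith [lt_of_le_of_ne hy.2 hne], k, by ring⟩

theorem intervalIntegral_comp_fract_mul (u v : ℝ → ℝ) (k : ℤ) :
    ∫ y in (k : ℝ)..k + 1, u (Int.fract y) * v y = ∫ y in (0 : ℝ)..1, u y * v (k + y) := by
  calc ∫ y in (k : ℝ)..k + 1, u (Int.fract y) * v y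
      = ∫ y in (k : ℝ)..k + 1, u (y - k) * v y :=
        integral_congr_ae ((ae_fract_eq_sub_of_mem_uIoc k).mono fun y hy hmem ↦ by rw [hy hmem])
    _ = ∫ y in (0 : ℝ)..1, u y * v (k + y) := by
        simpa using
          (integral_comp_add_left (fun y ↦ u (y - k) * v y) (k : ℝ) (a := 0) (b := 1)).symm

theorem intervalIntegrable_comp_fract_mul {u v : ℝ → ℝ} (hu : Continuous u) (hv : Continuous v)
    (k : ℤ) : IntervalIntegrable (fun y ↦ u (Int.fract y) * v y) volume k (k + 1) := by
  have hc : Continuous fun y ↦ u (y - k) * v y := by fun_prop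
  refine (hc.intervalIntegrable _ _).congr_ae ?_
  rw [Filter.EventuallyEq, ae_restrict_iff' measurableSet_uIoc]
  filter_upwards [ae_fract_eq_sub_of_mem_uIoc k] with y hy hmem
  rw [hy hmem]

theorem euler_maclaurin_int_add_one {f : ℝ → ℝ} {N : ℕ} (hN : 0 < N)
    (hf : ContDiff ℝ (2 * N : ℕ) f) (k : ℤ) :
    (∫ y in (k : ℝ)..k + 1, f y) - (f k + f (k + 1)) / 2 =
      (∫ y in (k : ℝ)..k + 1,
          bernoulliFun (2 * N) (Int.fract y) / (2 * N)! * iteratedDeriv (2 * N) f y) -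
        eulerMaclaurinCorrection f N k (k + 1) := by
  have h := euler_maclaurin_zero_one hN (f := fun y ↦ f (k + y)) (hf.comp (by fun_prop))
  have hR := intervalIntegral_comp_fract_mul (fun x ↦ bernoulliFun (2 * N) x / (2 * N)!)
    (iteratedDeriv (2 * N) f) k
  have hI := integral_comp_add_left f (k : ℝ) (a := 0) (b := 1)
  simp only [eulerMaclaurinCorrection, iteratedDeriv_comp_const_add, add_zero] at h hI ⊢
  rw [hR, ← hI, ← h]

theorem euler_maclaurin_zero_nat {f : ℝ → ℝ} {N : ℕ} (hN : 0 < N)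
    (hf : ContDiff ℝ (2 * N : ℕ) f) (K : ℕ) :
    (∫ y in (0 : ℝ)..K, f y) - 1 / 2 * ∑ k ∈ range K, (f k + f (k + 1)) =
      (∫ y in (0 : ℝ)..K,
          bernoulliFun (2 * N) (Int.fract y) / (2 * N)! * iteratedDeriv (2 * N) f y) -
        eulerMaclaurinCorrection f N 0 K := by
  induction K with
  | zero => simp [eulerMaclaurinCorrection]
  | succ K ih =>
    have hunit (k : ℕ) : IntervalIntegrable
        (fun y ↦ bernoulliFun (2 * N) (Int.fract y) / (2 * N)! * iteratedDeriv (2 * N) f y)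
        volume k (k + 1) := by
      simpa using intervalIntegrable_comp_fract_mul ((continuous_bernoulliFun _).div_const _)
        (hf.continuous_iteratedDeriv _ le_rfl) k
    have hf_int (a b : ℝ) : IntervalIntegrable f volume a b :=
      hf.continuous.intervalIntegrable a b
    have hG_int : IntervalIntegrable
        (fun y ↦ bernoulliFun (2 * N) (Int.fract y) / (2 * N)! * iteratedDeriv (2 * N) f y)
        volume 0 K := by
      simpa using IntervalIntegrable.trans_iterate (a := fun k : ℕ ↦ (k : ℝ))
        fun k _ ↦ by simpa using hunit k
    have hstep := euler_maclaurin_int_add_one hN hf K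
    push_cast at hstep ⊢
    rw [← integral_add_adjacent_intervals (hf_int 0 K) (hf_int K (K + 1)),
      ← integral_add_adjacent_intervals hG_int (hunit K), sum_range_succ,
      ← eulerMaclaurinCorrection_add f N 0 K]
    linarith

theorem iteratedDeriv_comp_const_add_mul_const {𝕜 : Type*} [NontriviallyNormedField 𝕜]
    {g : 𝕜 → 𝕜} {m : ℕ} (hg : ContDiff 𝕜 m g) (a c : 𝕜) :
    iteratedDeriv m (fun y ↦ g (a + y * c)) =
      fun y ↦ c ^ m * iteratedDeriv m g (a + y * c) := by
  have hga : ContDiff 𝕜 m fun u ↦ g (a + u) := hg.comp (contDiff_const.add contDiff_id)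
  simp_rw [mul_comm _ c]
  rw [iteratedDeriv_comp_const_mul hga c, iteratedDeriv_comp_const_add]

theorem mul_eulerMaclaurinCorrection_comp_const_add_mul_const {g : ℝ → ℝ} {N : ℕ}
    (hg : ContDiff ℝ (2 * N : ℕ) g) (a c x y : ℝ) :
    c * eulerMaclaurinCorrection (fun t ↦ g (a + t * c)) N x y =
      ∑ j ∈ Icc 1 N, (bernoulli (2 * j) : ℝ) / (2 * j)! * c ^ (2 * j) *
        (iteratedDeriv (2 * j - 1) g (a + y * c) - iteratedDeriv (2 * j - 1) g (a + x * c)) := by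
  rw [eulerMaclaurinCorrection, mul_sum]
  refine sum_congr rfl fun j hj ↦ ?_
  obtain ⟨hj1, hjN⟩ := mem_Icc.mp hj
  rw [iteratedDeriv_comp_const_add_mul_const (hg.of_le (by norm_cast; omega)),
    show 2 * j = 2 * j - 1 + 1 by omega, pow_succ']
  simp only [Nat.add_sub_cancel]
  ring

open Finset intervalIntegral in
theorem euler_maclaurin_general (g : ℝ → ℝ) (N : ℕ) (hN : 0 < N)
    (hg : ContDiff ℝ (2 * N : ℕ) g) (a b h : ℝ) (hh : 0 < h)
    (K : ℕ) (hKh : (b - a) / h = K) :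
    (∫ y in a..b, g y) -
        (h / 2) * ∑ j ∈ range K, (g (a + j * h) + g (a + (j + 1) * h)) =
      h ^ (2 * N + 1) *
          (∫ y in (0 : ℝ)..(K : ℝ),
            (Polynomial.aeval (Int.fract y) (Polynomial.bernoulli (2 * N)) : ℝ) /
                (Nat.factorial (2 * N)) * iteratedDeriv (2 * N) g (a + y * h)) -
        ∑ j ∈ Finset.Icc 1 N,
          ((bernoulli (2 * j) : ℚ) : ℝ) / (Nat.factorial (2 * j)) * h ^ (2 * j) *
            (iteratedDeriv (2 * j - 1) g b - iteratedDeriv (2 * j - 1) g a) := by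
  have hb : b = a + K * h := by
    rw [← hKh, div_mul_cancel₀ _ hh.ne']
    ring
  have hf : ContDiff ℝ (2 * N : ℕ) fun y ↦ g (a + y * h) := hg.comp (by fun_prop)
  have hI : ∫ y in a..b, g y = h * ∫ y in (0 : ℝ)..K, g (a + y * h) := by
    simp only [hb, mul_comm, mul_integral_comp_add_mul, mul_zero, add_zero]
  have hR : (∫ y in (0 : ℝ)..K, bernoulliFun (2 * N) (Int.fract y) / (2 * N)! *
        iteratedDeriv (2 * N) (fun y ↦ g (a + y * h)) y) =
      h ^ (2 * N) * ∫ y in (0 : ℝ)..K,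
        (Polynomial.aeval (Int.fract y) (Polynomial.bernoulli (2 * N)) : ℝ) / (2 * N)! *
          iteratedDeriv (2 * N) g (a + y * h) := by
    rw [iteratedDeriv_comp_const_add_mul_const hg, ← intervalIntegral.integral_const_mul]
    refine integral_congr fun y _ ↦ ?_
    simp only [bernoulliFun, Polynomial.eval_map_algebraMap]
    ring
  have hC := mul_eulerMaclaurinCorrection_comp_const_add_mul_const hg a h 0 K
  rw [zero_mul, add_zero, ← hb] at hC
  have hE := congrArg (h * ·) (euler_maclaurin_zero_nat hN hf K)
  rw [mul_sub, mul_sub, hR, hC] at hE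
  rw [hI, pow_succ', mul_assoc]
  linear_combination hE

open Finset intervalIntegral in
/-- The Euler–Maclaurin formula of order `N` for the error of the trapezoidal rule. -/
theorem euler_maclaurin (g : ℝ → ℝ) (N : ℕ) (hN : 0 < N)
    (hg : ContDiff ℝ (2 * N : ℕ) g) (a b h : ℝ) (hab : a < b) (hh : 0 < h)
    (K : ℕ) (hK : 0 < K) (hKh : (b - a) / h = K) :
    (∫ y in a..b, g y) -
        (h / 2) * ∑ j ∈ range K, (g (a + j * h) + g (a + (j + 1) * h)) =
      h ^ (2 * N + 1) *
          (∫ y in (0 : ℝ)..(K : ℝ),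
            (Polynomial.aeval (Int.fract y) (Polynomial.bernoulli (2 * N)) : ℝ) /
                (Nat.factorial (2 * N)) * iteratedDeriv (2 * N) g (a + y * h)) -
        ∑ j ∈ Finset.Icc 1 N,
          ((bernoulli (2 * j) : ℚ) : ℝ) / (Nat.factorial (2 * j)) * h ^ (2 * j) *
            (iteratedDeriv (2 * j - 1) g b - iteratedDeriv (2 * j - 1) g a) :=
  euler_maclaurin_general g N hN hg a b h hh K hKh
end

section
/- Let M be an n×n real symmetric matrix with operator norm ‖M‖ ≤ 1 (operator norm induced by the Euclidean norm on ℝⁿ). Then for every positive integer s and every δ > 0, setting d := ⌈√(2s·log(2/δ))⌉, there exists a real polynomial p of degree at most d such that ‖M^s − p(M)‖ ≤ δ, where p(M) denotes evaluation of the polynomial p at the matrix M. -/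
/-!
Since `(2x)^s = ∑ⱼ C(s, j) T_{s-2j}(x)` and `|T_k| ≤ 1` on `[-1, 1]`, dropping the Chebyshev terms
of degree `|s - 2j| > d` costs at most `2⁻ˢ ∑_{|s-2j|>d} C(s, j)`, the probability that a simple
random walk of `s` steps ends beyond `d`; the Chernoff bound makes this at most
`2 exp (-d² / (2s)) ≤ δ`. The spectrum of a symmetric `M` with `‖M‖ ≤ 1` lies in `[-1, 1]`, and
the continuous functional calculus turns the bound on `[-1, 1]` into one for the spectral norm.
-/

open Polynomial Finset Real

theorem pow_mul_eq_sum_choose_of_mul_eq_add {R : Type*} [CommRing R] {y : R} {g : ℤ → R}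
    (hg : ∀ m, y * g m = g (m + 1) + g (m - 1)) (s : ℕ) (m : ℤ) :
    y ^ s * g m = ∑ i ∈ range (s + 1), (s.choose i : R) * g (m + s - 2 * i) := by
  induction s generalizing m with
  | zero => simp
  | succ s ih =>
    rw [pow_succ, mul_assoc, hg, mul_add, ih, ih]
    convert (sum_choose_succ_mul (fun i k => g (m + k - i)) s).symm using 1
    · congr 1 <;> refine sum_congr rfl fun i hi => ?_
      all_goals
        have := mem_range.1 hi
        push_cast [Nat.cast_sub (by omega : i ≤ s + 1), Nat.cast_sub (by omega : i ≤ s)]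
        ring_nf
    · refine sum_congr rfl fun i hi => ?_
      have := mem_range.1 hi
      push_cast [Nat.cast_sub (by omega : i ≤ s + 1)]
      ring_nf

theorem Polynomial.Chebyshev.two_mul_X_pow_eq_sum_choose_mul_T (R : Type*) [CommRing R] (s : ℕ) :
    (2 * X : R[X]) ^ s = ∑ i ∈ range (s + 1), (s.choose i : R[X]) * T R (s - 2 * i) := by
  have hT (m : ℤ) : 2 * X * T R m = T R (m + 1) + T R (m - 1) := by rw [T_add_one]; ring
  simpa using pow_mul_eq_sum_choose_of_mul_eq_add hT s 0

theorem Real.sum_choose_mul_cosh (s : ℕ) (t : ℝ) :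
    ∑ i ∈ range (s + 1), (s.choose i : ℝ) * cosh (t * (s - 2 * i)) = (2 * cosh t) ^ s := by
  have hcosh (m : ℤ) :
      2 * cosh t * cosh (t * m) = cosh (t * ↑(m + 1)) + cosh (t * ↑(m - 1)) := by
    push_cast
    rw [mul_add, mul_sub, mul_one, cosh_add, cosh_sub]
    ring
  simpa using (pow_mul_eq_sum_choose_of_mul_eq_add hcosh s 0).symm

theorem Real.exp_le_two_mul_cosh (x : ℝ) : exp x ≤ 2 * cosh x := by
  rw [cosh_eq]
  linarith [exp_pos (-x)]

theorem sum_choose_filter_lt_abs_le_exp_mul_cosh_pow (s : ℕ) {r t : ℝ} (hr : 0 ≤ r)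
    (ht : 0 ≤ t) :
    ∑ j ∈ (range (s + 1)).filter (fun j : ℕ => r < |(s : ℝ) - 2 * j|), (s.choose j : ℝ) ≤
      2 * exp (-(t * r)) * (2 * cosh t) ^ s := by
  have hterm (k : ℝ) (hk : r < |k|) : 1 ≤ 2 * exp (-(t * r)) * cosh (t * k) := by
    have hcosh : cosh (t * r) ≤ cosh (t * k) := by
      rw [cosh_le_cosh, abs_mul, abs_mul, abs_of_nonneg ht, abs_of_nonneg hr]
      exact mul_le_mul_of_nonneg_left hk.le ht
    calc 1 = exp (-(t * r)) * exp (t * r) := by rw [← exp_add]; simp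
      _ ≤ exp (-(t * r)) * (2 * cosh (t * k)) :=
        mul_le_mul_of_nonneg_left ((exp_le_two_mul_cosh _).trans (by linarith)) (exp_pos _).le
      _ = 2 * exp (-(t * r)) * cosh (t * k) := by ring
  calc ∑ j ∈ (range (s + 1)).filter (fun j : ℕ => r < |(s : ℝ) - 2 * j|), (s.choose j : ℝ)
      ≤ ∑ j ∈ (range (s + 1)).filter (fun j : ℕ => r < |(s : ℝ) - 2 * j|),
          2 * exp (-(t * r)) * ((s.choose j : ℝ) * cosh (t * (s - 2 * j))) := by
        refine sum_le_sum fun j hj => ?_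
        have := hterm _ (mem_filter.1 hj).2
        nlinarith [(s.choose j).cast_nonneg (α := ℝ)]
    _ ≤ ∑ j ∈ range (s + 1), 2 * exp (-(t * r)) * ((s.choose j : ℝ) * cosh (t * (s - 2 * j))) :=
        sum_le_sum_of_subset_of_nonneg (filter_subset _ _) fun j _ _ => by positivity
    _ = 2 * exp (-(t * r)) * (2 * cosh t) ^ s := by rw [← mul_sum, sum_choose_mul_cosh]

theorem sum_choose_div_two_pow_filter_lt_abs_le (s : ℕ) {r : ℝ} (hr : 0 ≤ r) :
    ∑ j ∈ (range (s + 1)).filter (fun j : ℕ => r < |(s : ℝ) - 2 * j|), (s.choose j : ℝ) / 2 ^ s ≤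
      2 * exp (-(r ^ 2 / (2 * s))) := by
  -- `t = r / s` is the optimal Chernoff parameter; for `s = 0` both sides vanish as `r / 0 = 0`.
  have hexp : -(r / s * r) + s * ((r / s) ^ 2 / 2) = -(r ^ 2 / (2 * s)) := by
    rcases eq_or_ne (s : ℝ) 0 with hs | hs
    · simp [hs]
    · field_simp
      ring
  rw [← sum_div, div_le_iff₀ (by positivity)]
  calc _ ≤ 2 * exp (-(r / s * r)) * (2 * cosh (r / s)) ^ s :=
        sum_choose_filter_lt_abs_le_exp_mul_cosh_pow s hr (by positivity)
    _ ≤ 2 * exp (-(r / s * r)) * (2 * exp ((r / s) ^ 2 / 2)) ^ s := by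
        gcongr
        exact cosh_le_exp_half_sq _
    _ = 2 * exp (-(r ^ 2 / (2 * s))) * 2 ^ s := by
        rw [mul_pow, ← exp_nat_mul, ← hexp, exp_add]
        ring

theorem two_mul_exp_neg_sq_sqrt_div_le {s δ : ℝ} (hs : 0 < s) (hδ : 0 < δ) :
    2 * exp (-(√(2 * s * log (2 / δ)) ^ 2 / (2 * s))) ≤ δ := by
  have hlog : log (2 / δ) ≤ √(2 * s * log (2 / δ)) ^ 2 / (2 * s) := by
    rw [le_div_iff₀ (by positivity), sq_sqrt', mul_comm]
    exact le_max_left _ _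
  calc _ ≤ 2 * exp (-log (2 / δ)) := by gcongr
    _ = δ := by rw [exp_neg, exp_log (by positivity), inv_div]; field_simp

/-- The Chebyshev expansion `X ^ s = 2⁻ˢ ∑ⱼ C(s, j) T_{s-2j}` truncated to the terms with
`|s - 2j| ≤ r`. -/
noncomputable def truncChebyshevPow (s : ℕ) (r : ℝ) : ℝ[X] :=
  ∑ j ∈ (range (s + 1)).filter (fun j : ℕ => |(s : ℝ) - 2 * j| ≤ r),
    C ((s.choose j : ℝ) / 2 ^ s) * Chebyshev.T ℝ (s - 2 * j)

theorem natDegree_truncChebyshevPow_le (s : ℕ) {r : ℝ} (hr : 0 ≤ r) :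
    ((truncChebyshevPow s r).natDegree : ℤ) ≤ ⌈r⌉ := by
  have hdeg : (truncChebyshevPow s r).natDegree ≤ ⌈r⌉.toNat := by
    refine natDegree_sum_le_of_forall_le _ _ fun j hj => (natDegree_C_mul_le _ _).trans ?_
    have hj : |(s - 2 * j : ℤ)| ≤ ⌈r⌉ := by
      rw [← Int.cast_le (R := ℝ)]
      push_cast
      exact (mem_filter.1 hj).2.trans (Int.le_ceil r)
    rw [Chebyshev.natDegree_T]
    rw [Int.abs_eq_natAbs] at hj
    omega
  have := Int.ceil_nonneg hr
  omega

theorem X_pow_sub_truncChebyshevPow (s : ℕ) (r : ℝ) :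
    X ^ s - truncChebyshevPow s r =
      ∑ j ∈ (range (s + 1)).filter (fun j : ℕ => r < |(s : ℝ) - 2 * j|),
        C ((s.choose j : ℝ) / 2 ^ s) * Chebyshev.T ℝ (s - 2 * j) := by
  have hX : (X : ℝ[X]) ^ s =
      ∑ j ∈ range (s + 1), C ((s.choose j : ℝ) / 2 ^ s) * Chebyshev.T ℝ (s - 2 * j) := by
    have h2 : C ((2 : ℝ) ^ s)⁻¹ * (2 * X) ^ s = X ^ s := by
      rw [mul_pow, ← mul_assoc, ← C_ofNat, ← C_pow, ← C_mul, inv_mul_cancel₀ (by positivity),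
        C_1, one_mul]
    rw [← h2, Chebyshev.two_mul_X_pow_eq_sum_choose_mul_T, mul_sum]
    refine sum_congr rfl fun j _ => ?_
    rw [← mul_assoc, ← map_natCast C, ← C_mul, inv_mul_eq_div]
  simp only [← not_le]
  rw [hX, truncChebyshevPow, ← sum_filter_add_sum_filter_not _ (fun j : ℕ => |(s : ℝ) - 2 * j| ≤ r)]
  ring

theorem abs_eval_X_pow_sub_truncChebyshevPow_le (s : ℕ) (r : ℝ) {x : ℝ} (hx : |x| ≤ 1) :
    |(X ^ s - truncChebyshevPow s r).eval x| ≤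
      ∑ j ∈ (range (s + 1)).filter (fun j : ℕ => r < |(s : ℝ) - 2 * j|),
        (s.choose j : ℝ) / 2 ^ s := by
  rw [X_pow_sub_truncChebyshevPow, eval_finsetSum]
  refine (abs_sum_le_sum_abs _ _).trans (sum_le_sum fun j _ => ?_)
  rw [eval_mul, eval_C, abs_mul, abs_of_nonneg (by positivity)]
  exact mul_le_of_le_one_right (by positivity) (Chebyshev.abs_eval_T_real_le_one _ hx)

open scoped Matrix.Norms.L2Operator

theorem Matrix.IsHermitian.norm_cfc_le {n 𝕜 : Type*} [Fintype n] [DecidableEq n] [RCLike 𝕜]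
    {A : Matrix n n 𝕜} (hA : A.IsHermitian) {f : ℝ → ℝ} {c : ℝ} (hc : 0 ≤ c)
    (h : ∀ x ∈ spectrum ℝ A, |f x| ≤ c) : ‖cfc f A‖ ≤ c := by
  rw [hA.cfc_eq, Matrix.IsHermitian.cfc, Unitary.conjStarAlgAut_apply, ← Unitary.coe_star,
    CStarRing.norm_mul_coe_unitary, CStarRing.norm_coe_unitary_mul, Matrix.l2_opNorm_diagonal,
    pi_norm_le_iff_of_nonneg hc]
  intro i
  simpa using h _ (hA.eigenvalues_mem_spectrum_real i)

-- Not an instance of `spectrum.norm_le_norm_of_mem`: `‖(1 : Matrix n n 𝕜)‖ = 0` when `n` is empty.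
theorem Matrix.norm_le_l2_opNorm_of_mem_spectrum {n 𝕜 : Type*} [Fintype n] [DecidableEq n]
    [RCLike 𝕜] {A : Matrix n n 𝕜} {x : 𝕜} (hx : x ∈ spectrum 𝕜 A) : ‖x‖ ≤ ‖A‖ := by
  have h1 : ‖(1 : Matrix n n 𝕜)‖ ≤ 1 := by
    rw [Matrix.cstar_norm_def, map_one]
    exact ContinuousLinearMap.norm_id_le
  calc ‖x‖ ≤ ‖A‖ * ‖(1 : Matrix n n 𝕜)‖ := spectrum.norm_le_norm_mul_of_mem hx
    _ ≤ ‖A‖ := mul_le_of_le_one_right (norm_nonneg _) h1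

/-- For a symmetric matrix `M` with spectral norm at most `1`, the power `M^s` is approximated
in spectral norm up to `δ` by `p(M)` for some polynomial `p` of degree at most
`⌈√(2s·log(2/δ))⌉`. -/
theorem matrix_power_poly_approx (n : ℕ) (M : Matrix (Fin n) (Fin n) ℝ) (hM : M.IsSymm)
    (hnorm : ‖Matrix.toEuclideanCLM (𝕜 := ℝ) M‖ ≤ 1) (s : ℕ) (hs : 0 < s)
    (δ : ℝ) (hδ : 0 < δ) :
    ∃ p : Polynomial ℝ,
      (p.natDegree : ℤ) ≤ ⌈Real.sqrt (2 * s * Real.log (2 / δ))⌉ ∧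
      ‖Matrix.toEuclideanCLM (𝕜 := ℝ) (M ^ s - Polynomial.aeval M p)‖ ≤ δ := by
  set r := √(2 * s * log (2 / δ))
  have hr : 0 ≤ r := sqrt_nonneg _
  refine ⟨truncChebyshevPow s r, natDegree_truncChebyshevPow_le s hr, ?_⟩
  have hH : M.IsHermitian := Matrix.isHermitian_iff_isSymm.2 hM
  have htail := (sum_choose_div_two_pow_filter_lt_abs_le s hr).trans
    (two_mul_exp_neg_sq_sqrt_div_le (Nat.cast_pos.2 hs) hδ)
  have hcfc : M ^ s - aeval M (truncChebyshevPow s r) =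
      cfc (fun x => (X ^ s - truncChebyshevPow s r).eval x) M := by
    rw [cfc_polynomial _ _ hH.isSelfAdjoint, map_sub, map_pow, aeval_X]
  rw [← Matrix.cstar_norm_def, hcfc]
  refine hH.norm_cfc_le hδ.le fun x hx =>
    (abs_eval_X_pow_sub_truncChebyshevPow_le s r ?_).trans htail
  exact (Matrix.norm_le_l2_opNorm_of_mem_spectrum hx).trans hnorm
end

section
/- There exists an absolute constant C > 0 such that for all reals 0 < μ ≤ L and every δ ∈ (0, 1/2], there exists a real polynomial q of degree at most C·√(L/μ)·log(1/δ) + C satisfying q(0) = 1 and |q(x)| ≤ 4δ for all x ∈ [μ, L]. -/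
/-!
Take the Chebyshev polynomial `T n`, transport it from `[-1, 1]` to `[μ, L]` by the affine map
`x ↦ (L + μ - 2x) / (L - μ)` and divide by its value at `0`. On `[μ, L]` the numerator is at most
`1` in absolute value, while `0` is sent to `(L + μ) / (L - μ) = cosh (log ρ⁻¹)` with
`ρ = (√κ - 1) / (√κ + 1)`, `κ = L / μ`, where `T n` equals `cosh (n log ρ⁻¹) ≥ ρ⁻ⁿ / 2`. Hence the
residual is at most `2 ρⁿ ≤ 2 exp (-n / √κ)`, which is `≤ 2δ` once `n ≥ √κ log (1 / δ)`.
-/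

open Polynomial Polynomial.Chebyshev Real

theorem eval_T_real_half_add_inv {r : ℝ} (hr : 0 < r) (n : ℕ) :
    (T ℝ n).eval ((r + r⁻¹) / 2) = (r ^ n + (r ^ n)⁻¹) / 2 := by
  rw [← cosh_log hr, T_real_cosh, Int.cast_natCast, cosh_eq, exp_neg, exp_nat_mul, exp_log hr]

theorem div_le_exp_neg_inv {s : ℝ} (hs : 1 ≤ s) : (s - 1) / (s + 1) ≤ exp (-s⁻¹) := by
  calc (s - 1) / (s + 1) ≤ -s⁻¹ + 1 := by
        rw [div_le_iff₀ (by linarith)]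
        nlinarith [inv_le_one_of_one_le₀ hs, mul_inv_cancel₀ (by linarith : s ≠ 0)]
    _ ≤ exp (-s⁻¹) := add_one_le_exp _

noncomputable def chebyshevResidual (μ L : ℝ) (n : ℕ) : ℝ[X] :=
  C ((T ℝ n).eval ((L + μ) / (L - μ)))⁻¹ *
    (T ℝ n).comp (C (-2 / (L - μ)) * X + C ((L + μ) / (L - μ)))

theorem natDegree_chebyshevResidual_le (μ L : ℝ) (n : ℕ) :
    (chebyshevResidual μ L n).natDegree ≤ n := by
  calc (chebyshevResidual μ L n).natDegree
      ≤ (T ℝ n).natDegree * (C (-2 / (L - μ)) * X + C ((L + μ) / (L - μ))).natDegree :=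
        (natDegree_C_mul_le _ _).trans natDegree_comp_le
    _ ≤ n * 1 := by
        rw [natDegree_T, Int.natAbs_natCast]; exact Nat.mul_le_mul_left n natDegree_linear_le
    _ = n := mul_one n

section chebyshevResidual

variable {μ L : ℝ}

theorem chebyshevResidual_eval_zero (hμ : 0 ≤ μ) (hμL : μ < L) (n : ℕ) :
    (chebyshevResidual μ L n).eval 0 = 1 := by
  have hT : 1 ≤ (T ℝ n).eval ((L + μ) / (L - μ)) :=
    one_le_eval_T_real n ((one_le_div (by linarith)).mpr (by linarith))
  simp [chebyshevResidual, inv_mul_cancel₀ (zero_lt_one.trans_le hT).ne']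

theorem abs_eval_chebyshevResidual_le (hμ : 0 < μ) (hμL : μ < L) (n : ℕ) {x : ℝ}
    (hx : x ∈ Set.Icc μ L) :
    |(chebyshevResidual μ L n).eval x| ≤ 2 * ((√(L / μ) - 1) / (√(L / μ) + 1)) ^ n := by
  have hLμ : 0 < L - μ := sub_pos.mpr hμL
  have hmaps : |-2 / (L - μ) * x + (L + μ) / (L - μ)| ≤ 1 := by
    rw [show -2 / (L - μ) * x + (L + μ) / (L - μ) = (L + μ - 2 * x) / (L - μ) by ring, abs_div,
      abs_of_pos hLμ, div_le_one hLμ, abs_le]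
    constructor <;> linarith [hx.1, hx.2]
  set s := √(L / μ) with hs_def
  have hs : 1 < s := by rw [hs_def, lt_sqrt zero_le_one, one_pow, one_lt_div hμ]; exact hμL
  have hL : L = s ^ 2 * μ := by
    rw [sq_sqrt (div_nonneg (by linarith) hμ.le), div_mul_cancel₀ _ hμ.ne']
  have ha : (L + μ) / (L - μ) = ((s - 1) / (s + 1) + ((s - 1) / (s + 1))⁻¹) / 2 := by
    have : s - 1 ≠ 0 := by linarith
    have : s ^ 2 - 1 ≠ 0 := by nlinarith
    rw [hL, ← add_one_mul, ← sub_one_mul, mul_div_mul_right _ _ hμ.ne']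
    field_simp
    ring
  set ρ := (s - 1) / (s + 1)
  have hρ : 0 < ρ := div_pos (by linarith) (by linarith)
  simp only [chebyshevResidual, eval_mul, eval_C, eval_comp, eval_add, eval_X, abs_mul, ha,
    eval_T_real_half_add_inv hρ]
  calc |((ρ ^ n + (ρ ^ n)⁻¹) / 2)⁻¹| * |(T ℝ n).eval (-2 / (L - μ) * x + (ρ + ρ⁻¹) / 2)|
      ≤ ((ρ ^ n)⁻¹ / 2)⁻¹ * 1 := by
        rw [← ha, abs_of_pos (by positivity)]
        gcongr
        · linarith [pow_pos hρ n]
        · exact abs_eval_T_real_le_one n hmaps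
    _ = 2 * ρ ^ n := by field_simp

end chebyshevResidual

/-- The polynomial existence claim behind the `√κ·log(1/δ)` bound for Conjugate Gradient:
there is a polynomial of degree `O(√(L/μ)·log(1/δ))` equal to `1` at `0` and of magnitude at
most `4δ` on `[μ, L]`. -/
theorem conjugate_gradient_poly :
    ∃ C : ℝ, 0 < C ∧ ∀ μ L : ℝ, 0 < μ → μ ≤ L → ∀ δ : ℝ, δ ∈ Set.Ioc (0 : ℝ) (1 / 2) →
      ∃ q : Polynomial ℝ,
        (q.natDegree : ℝ) ≤ C * Real.sqrt (L / μ) * Real.log (1 / δ) + C ∧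
        q.eval 0 = 1 ∧
        ∀ x ∈ Set.Icc μ L, |q.eval x| ≤ 4 * δ := by
  refine ⟨1, one_pos, fun μ L hμ hμL δ ⟨hδ, hδ_half⟩ => ?_⟩
  have hlog : 0 ≤ log (1 / δ) := log_nonneg (by rw [le_div_iff₀ hδ]; linarith)
  have hs : 1 ≤ √(L / μ) := one_le_sqrt.mpr ((one_le_div hμ).mpr hμL)
  rcases hμL.eq_or_lt with rfl | hμL
  · refine ⟨C (-μ⁻¹) * X + C 1, ?_, by simp, fun x hx => ?_⟩
    · have : ((C (-μ⁻¹) * X + C 1).natDegree : ℝ) ≤ 1 := by exact_mod_cast natDegree_linear_le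
      nlinarith [mul_nonneg (zero_le_one.trans hs) hlog]
    · simp [le_antisymm hx.2 hx.1, hμ.ne', hδ.le]
  · set n := ⌈√(L / μ) * log (1 / δ)⌉₊
    refine ⟨chebyshevResidual μ L n, ?_, chebyshevResidual_eval_zero hμ.le hμL n, fun x hx => ?_⟩
    · calc ((chebyshevResidual μ L n).natDegree : ℝ) ≤ n := by
            exact_mod_cast natDegree_chebyshevResidual_le μ L n
        _ ≤ 1 * √(L / μ) * log (1 / δ) + 1 := by
            rw [one_mul]; exact (Nat.ceil_lt_add_one (by positivity)).le
    · have hn : log (1 / δ) ≤ n / √(L / μ) := by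
        rw [le_div_iff₀ (by linarith), mul_comm]; exact Nat.le_ceil _
      calc |(chebyshevResidual μ L n).eval x|
          ≤ 2 * ((√(L / μ) - 1) / (√(L / μ) + 1)) ^ n :=
            abs_eval_chebyshevResidual_le hμ hμL n hx
        _ ≤ 2 * exp (-(√(L / μ))⁻¹) ^ n := by
            gcongr; exact div_le_exp_neg_inv hs
        _ ≤ 2 * exp (-log (1 / δ)) := by
            rw [← exp_nat_mul]; gcongr; rw [mul_neg, neg_le_neg_iff, ← div_eq_mul_inv]; exact hn
        _ ≤ 4 * δ := by rw [exp_neg, exp_log (by positivity), one_div, inv_inv]; linarith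
end
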